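/- arXiv:2512.24056 — 11 statements merged into one kernel-verified Lean document; each statement's English description precedes it below -/
import Mathlib

section
/- (Performance difference lemma, action-value form.) Let (S,A,P,r,γ) be a finite discounted MDP, π a policy, Q : S × A → ℝ arbitrary, Q^π a fixed point of F^π, and ρ : S × A → ℝ a probability distribution (ρ ≥ 0 and ∑_{(s,a)} ρ(s,a) = 1). Define the discounted visitation measure v^π_ρ(s,a) = (1−γ)·∑_{t=0}^∞ γ^t · ∑_{(s₀,a₀)} ρ(s₀,a₀) · ((P^π)^t)((s₀,a₀),(s,a)) (the series converges absolutely). Then ∑_{(s,a)} ρ(s,a)·(Q^π(s,a) − Q(s,a)) = (1/(1−γ)) · ∑_{(s,a)} v^π_ρ(s,a) · ((F^π Q)(s,a) − Q(s,a)). -/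
/-- The state–action transition matrix `P^π` of a policy. -/
def saMatrix {S A : Type*} [Fintype S] [Fintype A]
    (P : S → A → S → ℝ) (pol : S → A → ℝ) : Matrix (S × A) (S × A) ℝ :=
  Matrix.of fun q q' => P q.1 q.2 q'.1 * pol q'.1 q'.2

/-!
Write `M = P^π`, a row-stochastic matrix, and `D = Q^π - Q`. The fixed-point equation for `Q^π`
turns the advantage `F^π Q - Q` into `D - γ M D`. Against the discounted occupation vectors
`γ^t ρ Mᵗ` this telescopes, `γ^t ρ Mᵗ (D - γ M D) = γ^t ρ Mᵗ D - γ^(t+1) ρ Mᵗ⁺¹ D`, and the tail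
vanishes because the entries of `Mᵗ` stay in `[0, 1]`, so `ρ Mᵗ` is bounded and `γ^t ρ Mᵗ → 0`.
-/

open Finset Filter Topology

namespace Matrix

variable {n : Type*} [Fintype n] [DecidableEq n] {M : Matrix n n ℝ} {γ : ℝ}

theorem abs_vecMul_apply_le_of_mem_rowStochastic (hM : M ∈ rowStochastic ℝ n)
    (ρ : n → ℝ) (j : n) : |(ρ ᵥ* M) j| ≤ ∑ i, |ρ i| := by
  calc |(ρ ᵥ* M) j| ≤ ∑ i, |ρ i * M i j| := abs_sum_le_sum_abs _ _
    _ ≤ ∑ i, |ρ i| := by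
      refine sum_le_sum fun i _ => ?_
      rw [abs_mul, abs_of_nonneg (nonneg_of_mem_rowStochastic hM)]
      exact mul_le_of_le_one_right (abs_nonneg _) (le_one_of_mem_rowStochastic hM)

theorem summable_geometric_mul_vecMul_pow_apply (hM : M ∈ rowStochastic ℝ n)
    (hγ : |γ| < 1) (ρ : n → ℝ) (j : n) :
    Summable fun t : ℕ => γ ^ t * (ρ ᵥ* M ^ t) j := by
  refine .of_norm_bounded ((summable_geometric_of_abs_lt_one hγ).norm.mul_right (∑ i, |ρ i|))
    fun t => ?_
  rw [norm_mul]
  exact mul_le_mul_of_nonneg_left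
    (abs_vecMul_apply_le_of_mem_rowStochastic (pow_mem hM t) ρ j) (norm_nonneg _)

theorem hasSum_geometric_mul_vecMul_pow_dotProduct (hM : M ∈ rowStochastic ℝ n)
    (hγ : |γ| < 1) (ρ D : n → ℝ) :
    HasSum (fun t : ℕ => ∑ j, γ ^ t * (ρ ᵥ* M ^ t) j * (D - γ • M *ᵥ D) j) (ρ ⬝ᵥ D) := by
  have hdot : ∀ t (v : n → ℝ), ∑ j, γ ^ t * (ρ ᵥ* M ^ t) j * v j = γ ^ t * (ρ ᵥ* M ^ t ⬝ᵥ v) := by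
    simp [dotProduct, mul_sum, mul_assoc]
  set a : ℕ → ℝ := fun t => γ ^ t * (ρ ᵥ* M ^ t ⬝ᵥ D)
  have hterm : ∀ t, ∑ j, γ ^ t * (ρ ᵥ* M ^ t) j * (D - γ • M *ᵥ D) j = a t - a (t + 1) := by
    intro t
    rw [hdot, dotProduct_sub, dotProduct_smul, dotProduct_mulVec, vecMul_vecMul, ← pow_succ]
    simp only [a, pow_succ, smul_eq_mul]
    ring
  have ha : Tendsto a atTop (𝓝 0) := by
    simp only [a, ← hdot]
    simpa using tendsto_finsetSum univ fun j _ =>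
      (summable_geometric_mul_vecMul_pow_apply hM hγ ρ j).tendsto_atTop_zero.mul_const (D j)
  have hsum : Summable fun t : ℕ => ∑ j, γ ^ t * (ρ ᵥ* M ^ t) j * (D - γ • M *ᵥ D) j :=
    summable_sum fun j _ => (summable_geometric_mul_vecMul_pow_apply hM hγ ρ j).mul_right _
  rw [hsum.hasSum_iff_tendsto_nat]
  simp only [hterm, sum_range_sub']
  simpa [a] using (tendsto_const_nhds (x := a 0)).sub ha

theorem dotProduct_eq_sum_tsum_geometric_mul_vecMul_pow (hM : M ∈ rowStochastic ℝ n)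
    (hγ : |γ| < 1) (ρ D : n → ℝ) :
    ρ ⬝ᵥ D = ∑ j, (∑' t : ℕ, γ ^ t * (ρ ᵥ* M ^ t) j) * (D - γ • M *ᵥ D) j := by
  simp_rw [← tsum_mul_right]
  rw [← Summable.tsum_finsetSum fun j _ =>
    (summable_geometric_mul_vecMul_pow_apply hM hγ ρ j).mul_right _]
  exact (hasSum_geometric_mul_vecMul_pow_dotProduct hM hγ ρ D).tsum_eq.symm

end Matrix

open Matrix

section

variable {S A : Type*} [Fintype S] [Fintype A] (P : S → A → S → ℝ) (pol : S → A → ℝ)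

theorem saMatrix_mulVec (Q : S × A → ℝ) (p : S × A) :
    (saMatrix P pol *ᵥ Q) p = ∑ s', P p.1 p.2 s' * ∑ a', pol s' a' * Q (s', a') := by
  simp only [mulVec, dotProduct, saMatrix, of_apply, Fintype.sum_prod_type, mul_sum, mul_assoc]

theorem saMatrix_mem_rowStochastic [DecidableEq S] [DecidableEq A]
    (hP0 : ∀ s a s', 0 ≤ P s a s') (hP1 : ∀ s a, ∑ s', P s a s' = 1)
    (hpol0 : ∀ s a, 0 ≤ pol s a) (hpol1 : ∀ s, ∑ a, pol s a = 1) :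
    saMatrix P pol ∈ rowStochastic ℝ (S × A) := by
  refine mem_rowStochastic.2 ⟨fun _ _ => mul_nonneg (hP0 ..) (hpol0 ..), funext fun p => ?_⟩
  simp [saMatrix_mulVec, hpol1, hP1]

end

theorem performance_difference_action_value_general
    {S A : Type*} [Fintype S] [Fintype A]
    [DecidableEq S] [DecidableEq A]
    (P : S → A → S → ℝ) (hP0 : ∀ s a s', 0 ≤ P s a s')
    (hP1 : ∀ s a, ∑ s', P s a s' = 1)
    (r : S → A → ℝ)
    (γ : ℝ) (hγ0 : 0 ≤ γ) (hγ1 : γ < 1)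
    (pol : S → A → ℝ) (hpol0 : ∀ s a, 0 ≤ pol s a) (hpol1 : ∀ s, ∑ a, pol s a = 1)
    (Q Qpi : S × A → ℝ)
    (hQpi : ∀ s a, r s a + γ * ∑ s', P s a s' * ∑ a', pol s' a' * Qpi (s', a')
      = Qpi (s, a))
    (ρ : S × A → ℝ) :
    ∑ p, ρ p * (Qpi p - Q p)
      = (1 / (1 - γ)) *
        ∑ p : S × A,
          ((1 - γ) * ∑' t : ℕ, γ ^ t *
              ∑ p₀ : S × A, ρ p₀ * ((saMatrix P pol ^ t) p₀ p)) *
            ((r p.1 p.2 + γ * ∑ s', P p.1 p.2 s' * ∑ a', pol s' a' * Q (s', a'))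
              - Q p) := by
  have hM := saMatrix_mem_rowStochastic P pol hP0 hP1 hpol0 hpol1
  have hγ : |γ| < 1 := abs_lt.2 ⟨by linarith, hγ1⟩
  have hadvantage : ∀ p : S × A,
      r p.1 p.2 + γ * ∑ s', P p.1 p.2 s' * ∑ a', pol s' a' * Q (s', a') - Q p
        = ((Qpi - Q) - γ • saMatrix P pol *ᵥ (Qpi - Q)) p := by
    intro p
    have hfix : Qpi p = r p.1 p.2 + γ * (saMatrix P pol *ᵥ Qpi) p := by
      rw [saMatrix_mulVec, hQpi]
    rw [← saMatrix_mulVec, mulVec_sub, Pi.sub_apply, Pi.sub_apply, hfix]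
    simp only [Pi.smul_apply, Pi.sub_apply, smul_eq_mul]
    ring
  simp_rw [hadvantage, mul_assoc, ← mul_sum, ← mul_assoc, one_div,
    inv_mul_cancel₀ (sub_ne_zero.2 hγ1.ne'), one_mul]
  -- `∑ p₀, ρ p₀ * (M ^ t) p₀ p` is `(ρ ᵥ* M ^ t) p` by unfolding `vecMul`
  exact dotProduct_eq_sum_tsum_geometric_mul_vecMul_pow hM hγ ρ (Qpi - Q)

/-- performance difference lemma, action-value form. -/
theorem performance_difference_action_value
    {S A : Type*} [Fintype S] [Fintype A] [Nonempty S] [Nonempty A]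
    [DecidableEq S] [DecidableEq A]
    (P : S → A → S → ℝ) (hP0 : ∀ s a s', 0 ≤ P s a s')
    (hP1 : ∀ s a, ∑ s', P s a s' = 1)
    (r : S → A → ℝ) (hr0 : ∀ s a, 0 ≤ r s a) (hr1 : ∀ s a, r s a ≤ 1)
    (γ : ℝ) (hγ0 : 0 ≤ γ) (hγ1 : γ < 1)
    (pol : S → A → ℝ) (hpol0 : ∀ s a, 0 ≤ pol s a) (hpol1 : ∀ s, ∑ a, pol s a = 1)
    (Q Qpi : S × A → ℝ)
    (hQpi : ∀ s a, r s a + γ * ∑ s', P s a s' * ∑ a', pol s' a' * Qpi (s', a')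
      = Qpi (s, a))
    (ρ : S × A → ℝ) (hρ0 : ∀ p, 0 ≤ ρ p) (hρ1 : ∑ p, ρ p = 1) :
    ∑ p, ρ p * (Qpi p - Q p)
      = (1 / (1 - γ)) *
        ∑ p : S × A,
          ((1 - γ) * ∑' t : ℕ, γ ^ t *
              ∑ p₀ : S × A, ρ p₀ * ((saMatrix P pol ^ t) p₀ p)) *
            ((r p.1 p.2 + γ * ∑ s', P p.1 p.2 s' * ∑ a', pol s' a' * Q (s', a'))
              - Q p) :=
  performance_difference_action_value_general P hP0 hP1 r γ hγ0 hγ1 pol hpol0 hpol1 Q Qpi hQpi ρ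
end

section
/- Let (S,A,P,r,γ) be a finite discounted MDP and let π, π' be policies. If Q^π and Q^{π'} satisfy F^π Q^π = Q^π and F^{π'} Q^{π'} = Q^{π'}, then ‖Q^π − Q^{π'}‖∞ ≤ (γ·|A|/(1−γ)²)·‖π − π'‖∞, where |A| is the cardinality of A and ‖π − π'‖∞ = max_{s,a} |π s a − π' s a|. -/
/-!
Write `P^π Q (s,a) = ∑ s', P s a s' ∑ a', π s' a' Q (s',a')`, so a fixed point reads
`Q^π = r + γ P^π Q^π`. Averaging against stochastic weights does not increase the sup norm, so
`‖Q^{π'}‖ ≤ 1/(1-γ)`. Splitting `P^π Q^π - P^{π'} Q^{π'} = P^π (Q^π - Q^{π'}) + P^{π-π'} Q^{π'}`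
gives `‖Q^π - Q^{π'}‖ ≤ γ ‖Q^π - Q^{π'}‖ + γ |A| ‖π - π'‖ / (1-γ)`, which rearranges to the claim.
-/

open Finset

lemma abs_sum_mul_le_of_stochastic {ι : Type*} [Fintype ι] {w f : ι → ℝ} {C : ℝ}
    (hw0 : ∀ i, 0 ≤ w i) (hw1 : ∑ i, w i = 1) (hf : ∀ i, |f i| ≤ C) :
    |∑ i, w i * f i| ≤ C :=
  calc |∑ i, w i * f i| ≤ ∑ i, w i * |f i| := by
        simpa only [abs_mul, abs_of_nonneg (hw0 _)] using
          abs_sum_le_sum_abs (fun i => w i * f i) univ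
    _ ≤ ∑ i, w i * C := sum_le_sum fun i _ => mul_le_mul_of_nonneg_left (hf i) (hw0 i)
    _ = C := by rw [← sum_mul, hw1, one_mul]

lemma norm_le_div_one_sub_of_abs_le_add_mul {ι : Type*} [Fintype ι] {f : ι → ℝ} {c γ : ℝ}
    (hc : 0 ≤ c) (hγ0 : 0 ≤ γ) (hγ1 : γ < 1) (hf : ∀ i, |f i| ≤ c + γ * ‖f‖) :
    ‖f‖ ≤ c / (1 - γ) := by
  have hself : ‖f‖ ≤ c + γ * ‖f‖ := (pi_norm_le_iff_of_nonneg (by positivity)).2 hf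
  rw [le_div_iff₀ (by linarith)]
  linarith

section ExpectedNextValue

variable {S A : Type*} [Fintype S] [Fintype A]

noncomputable def expectedNextValue (P : S → A → S → ℝ) (ρ : S → A → ℝ) (Q : S × A → ℝ)
    (s : S) (a : A) : ℝ :=
  ∑ s', P s a s' * ∑ a', ρ s' a' * Q (s', a')

lemma expectedNextValue_sub_expectedNextValue (P : S → A → S → ℝ) (ρ ρ' : S → A → ℝ)
    (Q Q' : S × A → ℝ) (s : S) (a : A) :
    expectedNextValue P ρ Q s a - expectedNextValue P ρ' Q' s a
      = expectedNextValue P ρ (Q - Q') s a + expectedNextValue P (ρ - ρ') Q' s a := by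
  simp only [expectedNextValue, ← sum_add_distrib, ← sum_sub_distrib, ← mul_add, ← mul_sub]
  refine sum_congr rfl fun s' _ => congrArg _ (sum_congr rfl fun a' _ => ?_)
  simp only [Pi.sub_apply]
  ring

variable {P : S → A → S → ℝ} (hP0 : ∀ s a s', 0 ≤ P s a s') (hP1 : ∀ s a, ∑ s', P s a s' = 1)
include hP0 hP1

lemma abs_expectedNextValue_le {ρ : S → A → ℝ} (hρ0 : ∀ s a, 0 ≤ ρ s a)
    (hρ1 : ∀ s, ∑ a, ρ s a = 1) {Q : S × A → ℝ} {C : ℝ} (hQ : ∀ p, |Q p| ≤ C) (s : S) (a : A) :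
    |expectedNextValue P ρ Q s a| ≤ C :=
  abs_sum_mul_le_of_stochastic (hP0 s a) (hP1 s a) fun s' =>
    abs_sum_mul_le_of_stochastic (hρ0 s') (hρ1 s') fun a' => hQ (s', a')

lemma abs_expectedNextValue_le_card_mul {ρ : S → A → ℝ} {Q : S × A → ℝ} {E M : ℝ}
    (hE : 0 ≤ E) (hρ : ∀ s a, |ρ s a| ≤ E) (hQ : ∀ p, |Q p| ≤ M) (s : S) (a : A) :
    |expectedNextValue P ρ Q s a| ≤ Fintype.card A * E * M := by
  refine abs_sum_mul_le_of_stochastic (hP0 s a) (hP1 s a) fun s' => ?_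
  calc |∑ a', ρ s' a' * Q (s', a')| ≤ ∑ a', |ρ s' a'| * |Q (s', a')| := by
        simpa only [abs_mul] using abs_sum_le_sum_abs (fun a' => ρ s' a' * Q (s', a')) univ
    _ ≤ ∑ _a' : A, E * M :=
        sum_le_sum fun a' _ => mul_le_mul (hρ s' a') (hQ _) (abs_nonneg _) hE
    _ = Fintype.card A * E * M := by simp [mul_assoc]

lemma norm_le_of_bellman_fixed {ρ : S → A → ℝ} (hρ0 : ∀ s a, 0 ≤ ρ s a)
    (hρ1 : ∀ s, ∑ a, ρ s a = 1) {r : S → A → ℝ} {R γ : ℝ} (hR : 0 ≤ R) (hr : ∀ s a, |r s a| ≤ R)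
    (hγ0 : 0 ≤ γ) (hγ1 : γ < 1) {Q : S × A → ℝ}
    (hQ : ∀ s a, r s a + γ * expectedNextValue P ρ Q s a = Q (s, a)) :
    ‖Q‖ ≤ R / (1 - γ) := by
  refine norm_le_div_one_sub_of_abs_le_add_mul hR hγ0 hγ1 fun ⟨s, a⟩ => ?_
  have hnext := abs_expectedNextValue_le hP0 hP1 hρ0 hρ1 (norm_le_pi_norm Q) s a
  rw [← hQ]
  calc |r s a + γ * expectedNextValue P ρ Q s a|
      ≤ |r s a| + γ * |expectedNextValue P ρ Q s a| := by
        simpa only [abs_mul, abs_of_nonneg hγ0] using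
          abs_add_le (r s a) (γ * expectedNextValue P ρ Q s a)
    _ ≤ R + γ * ‖Q‖ := by gcongr; exact hr s a

end ExpectedNextValue

theorem action_value_lipschitz_in_policy_general
    {S A : Type*} [Fintype S] [Fintype A]
    (P : S → A → S → ℝ) (hP0 : ∀ s a s', 0 ≤ P s a s')
    (hP1 : ∀ s a, ∑ s', P s a s' = 1)
    (r : S → A → ℝ) (hr0 : ∀ s a, 0 ≤ r s a) (hr1 : ∀ s a, r s a ≤ 1)
    (γ : ℝ) (hγ0 : 0 ≤ γ) (hγ1 : γ < 1)
    (pol pol' : S → A → ℝ)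
    (hpol0 : ∀ s a, 0 ≤ pol s a) (hpol1 : ∀ s, ∑ a, pol s a = 1)
    (hpol0' : ∀ s a, 0 ≤ pol' s a) (hpol1' : ∀ s, ∑ a, pol' s a = 1)
    (Qpi Qpi' : S × A → ℝ)
    (hQpi : ∀ s a, r s a + γ * ∑ s', P s a s' * ∑ a', pol s' a' * Qpi (s', a')
      = Qpi (s, a))
    (hQpi' : ∀ s a, r s a + γ * ∑ s', P s a s' * ∑ a', pol' s' a' * Qpi' (s', a')
      = Qpi' (s, a)) :
    ‖(fun p : S × A => Qpi p - Qpi' p)‖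
      ≤ γ * (Fintype.card A : ℝ) / (1 - γ) ^ 2 *
        ‖(fun p : S × A => pol p.1 p.2 - pol' p.1 p.2)‖ := by
  set E := ‖(fun p : S × A => pol p.1 p.2 - pol' p.1 p.2)‖
  have hE : ∀ s a, |(pol - pol') s a| ≤ E := fun s a =>
    norm_le_pi_norm (fun p : S × A => pol p.1 p.2 - pol' p.1 p.2) (s, a)
  have hQ'bound : ‖Qpi'‖ ≤ 1 / (1 - γ) :=
    norm_le_of_bellman_fixed hP0 hP1 hpol0' hpol1' zero_le_one
      (fun s a => abs_le.2 ⟨by linarith [hr0 s a], hr1 s a⟩) hγ0 hγ1 hQpi'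
  have hdiff : ‖Qpi - Qpi'‖ ≤ γ * (Fintype.card A * E * ‖Qpi'‖) / (1 - γ) := by
    refine norm_le_div_one_sub_of_abs_le_add_mul (by positivity) hγ0 hγ1 fun ⟨s, a⟩ => ?_
    have hsplit : (Qpi - Qpi') (s, a) = γ * (expectedNextValue P pol (Qpi - Qpi') s a
        + expectedNextValue P (pol - pol') Qpi' s a) := by
      rw [← expectedNextValue_sub_expectedNextValue, Pi.sub_apply, ← hQpi, ← hQpi']
      simp only [expectedNextValue]
      ring
    have h₁ := abs_expectedNextValue_le hP0 hP1 hpol0 hpol1 (norm_le_pi_norm (Qpi - Qpi')) s a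
    have h₂ := abs_expectedNextValue_le_card_mul hP0 hP1 (norm_nonneg _) hE
      (norm_le_pi_norm Qpi') s a
    rw [hsplit, abs_mul, abs_of_nonneg hγ0]
    linarith [mul_le_mul_of_nonneg_left ((abs_add_le _ _).trans (add_le_add h₁ h₂)) hγ0]
  calc ‖Qpi - Qpi'‖ ≤ γ * (Fintype.card A * E * ‖Qpi'‖) / (1 - γ) := hdiff
    _ ≤ γ * (Fintype.card A * E * (1 / (1 - γ))) / (1 - γ) := by gcongr
    _ = γ * Fintype.card A / (1 - γ) ^ 2 * E := by field_simp

/-- Lipschitz continuity of the action value function in the policy: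
`‖Q^π − Q^{π'}‖∞ ≤ γ|A|/(1-γ)² · ‖π − π'‖∞`. -/
theorem action_value_lipschitz_in_policy
    {S A : Type*} [Fintype S] [Fintype A] [Nonempty S] [Nonempty A]
    (P : S → A → S → ℝ) (hP0 : ∀ s a s', 0 ≤ P s a s')
    (hP1 : ∀ s a, ∑ s', P s a s' = 1)
    (r : S → A → ℝ) (hr0 : ∀ s a, 0 ≤ r s a) (hr1 : ∀ s a, r s a ≤ 1)
    (γ : ℝ) (hγ0 : 0 ≤ γ) (hγ1 : γ < 1)
    (pol pol' : S → A → ℝ)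
    (hpol0 : ∀ s a, 0 ≤ pol s a) (hpol1 : ∀ s, ∑ a, pol s a = 1)
    (hpol0' : ∀ s a, 0 ≤ pol' s a) (hpol1' : ∀ s, ∑ a, pol' s a = 1)
    (Qpi Qpi' : S × A → ℝ)
    (hQpi : ∀ s a, r s a + γ * ∑ s', P s a s' * ∑ a', pol s' a' * Qpi (s', a')
      = Qpi (s, a))
    (hQpi' : ∀ s a, r s a + γ * ∑ s', P s a s' * ∑ a', pol' s' a' * Qpi' (s', a')
      = Qpi' (s, a)) :
    ‖(fun p : S × A => Qpi p - Qpi' p)‖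
      ≤ γ * (Fintype.card A : ℝ) / (1 - γ) ^ 2 *
        ‖(fun p : S × A => pol p.1 p.2 - pol' p.1 p.2)‖ :=
  action_value_lipschitz_in_policy_general P hP0 hP1 r hr0 hr1 γ hγ0 hγ1 pol pol' hpol0 hpol1 hpol0'
    hpol1' Qpi Qpi' hQpi hQpi'
end

section
/- (σ-weighted Bellman operator.) Let (S,A,P,r,γ) be a finite discounted MDP, π a policy, σ : S × A → ℝ with σ̃ ≤ σ(s,a) ≤ 1 for all (s,a) where σ̃ > 0, and 0 < α ≤ 1. Define (F_{σ,α} Q)(s,a) = Q(s,a) + α·σ(s,a)·((F^π Q)(s,a) − Q(s,a)). Then: (a) if F^π Q^π = Q^π then F_{σ,α} Q^π = Q^π; (b) for all Q, Q' : S × A → ℝ, ‖F_{σ,α} Q − F_{σ,α} Q'‖∞ ≤ (1 − α(1−γ)σ̃)·‖Q − Q'‖∞. -/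
/-- σ-weighted Bellman operator: (a) it fixes `Q^π`; (b) it is a
`(1 - α(1-γ)σ̃)`-contraction in the sup norm. -/
theorem sigma_weighted_bellman_properties
    {S A : Type*} [Fintype S] [Fintype A] [Nonempty S] [Nonempty A]
    (P : S → A → S → ℝ) (hP0 : ∀ s a s', 0 ≤ P s a s')
    (hP1 : ∀ s a, ∑ s', P s a s' = 1)
    (r : S → A → ℝ) (hr0 : ∀ s a, 0 ≤ r s a) (hr1 : ∀ s a, r s a ≤ 1)
    (γ : ℝ) (hγ0 : 0 ≤ γ) (hγ1 : γ < 1)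
    (pol : S → A → ℝ) (hpol0 : ∀ s a, 0 ≤ pol s a) (hpol1 : ∀ s, ∑ a, pol s a = 1)
    (σ : S × A → ℝ) (σt : ℝ) (hσt : 0 < σt)
    (hσ : ∀ p, σt ≤ σ p ∧ σ p ≤ 1)
    (α : ℝ) (hα0 : 0 < α) (hα1 : α ≤ 1)
    (Fσ : (S × A → ℝ) → (S × A → ℝ))
    (hFσ : ∀ (Q : S × A → ℝ) (s : S) (a : A),
      Fσ Q (s, a) = Q (s, a) + α * σ (s, a) *
        ((r s a + γ * ∑ s', P s a s' * ∑ a', pol s' a' * Q (s', a')) - Q (s, a))) :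
    (∀ Qpi : S × A → ℝ,
        (∀ s a, r s a + γ * ∑ s', P s a s' * ∑ a', pol s' a' * Qpi (s', a')
          = Qpi (s, a)) →
        ∀ s a, Fσ Qpi (s, a) = Qpi (s, a)) ∧
      (∀ Q Q' : S × A → ℝ,
        ‖(fun p : S × A => Fσ Q p - Fσ Q' p)‖
          ≤ (1 - α * (1 - γ) * σt) * ‖(fun p : S × A => Q p - Q' p)‖) := by
  constructor
  · intro Qpi h s a
    rw [hFσ, h]; ring
  · intro Q Q'
    set N := ‖(fun p : S × A => Q p - Q' p)‖ with hNdef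
    have hN0 : 0 ≤ N := norm_nonneg _
    have hN : ∀ p : S × A, |Q p - Q' p| ≤ N := by
      intro p
      have := norm_le_pi_norm (fun p : S × A => Q p - Q' p) p
      simpa [hNdef] using this
    have hσt1 : σt ≤ 1 :=
      le_trans (hσ (Classical.arbitrary _)).1 (hσ (Classical.arbitrary _)).2
    have h1 : α * (1 - γ) ≤ 1 := by nlinarith
    have hc0 : 0 ≤ 1 - α * (1 - γ) * σt := by
      nlinarith [mul_le_mul h1 hσt1 hσt.le (by norm_num : (0:ℝ) ≤ 1)]
    refine (pi_norm_le_iff_of_nonneg (mul_nonneg hc0 hN0)).2 ?_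
    rintro ⟨s, a⟩
    have hE : |(∑ s', P s a s' * ∑ a', pol s' a' * Q (s', a')) -
        (∑ s', P s a s' * ∑ a', pol s' a' * Q' (s', a'))| ≤ N := by
      rw [← Finset.sum_sub_distrib]
      calc |∑ s', (P s a s' * ∑ a', pol s' a' * Q (s', a') -
              P s a s' * ∑ a', pol s' a' * Q' (s', a'))|
          ≤ ∑ s', |P s a s' * ∑ a', pol s' a' * Q (s', a') -
              P s a s' * ∑ a', pol s' a' * Q' (s', a')| :=
            Finset.abs_sum_le_sum_abs _ _
        _ ≤ ∑ s', P s a s' * N := by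
            apply Finset.sum_le_sum
            intro s' _
            rw [← mul_sub, abs_mul, abs_of_nonneg (hP0 s a s')]
            apply mul_le_mul_of_nonneg_left _ (hP0 s a s')
            rw [← Finset.sum_sub_distrib]
            calc |∑ a', (pol s' a' * Q (s', a') - pol s' a' * Q' (s', a'))|
                ≤ ∑ a', |pol s' a' * Q (s', a') - pol s' a' * Q' (s', a')| :=
                  Finset.abs_sum_le_sum_abs _ _
              _ ≤ ∑ a', pol s' a' * N := by
                  apply Finset.sum_le_sum
                  intro a' _
                  rw [← mul_sub, abs_mul, abs_of_nonneg (hpol0 s' a')]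
                  exact mul_le_mul_of_nonneg_left (hN (s', a')) (hpol0 s' a')
              _ = N := by rw [← Finset.sum_mul, hpol1, one_mul]
        _ = N := by rw [← Finset.sum_mul, hP1, one_mul]
    have hD := hN (s, a)
    have hσp := hσ (s, a)
    have hkey : Fσ Q (s, a) - Fσ Q' (s, a) =
        (1 - α * σ (s, a)) * (Q (s, a) - Q' (s, a)) +
          α * σ (s, a) * γ * ((∑ s', P s a s' * ∑ a', pol s' a' * Q (s', a')) -
            (∑ s', P s a s' * ∑ a', pol s' a' * Q' (s', a'))) := by
      rw [hFσ, hFσ]; ring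
    rw [Real.norm_eq_abs, hkey]
    have hD' := abs_le.1 hD
    have hE' := abs_le.1 hE
    rw [abs_le]
    have hασ0 : 0 ≤ 1 - α * σ (s, a) := by nlinarith [hσp.2]
    have hασγ0 : 0 ≤ α * σ (s, a) * γ :=
      mul_nonneg (mul_nonneg hα0.le (hσt.le.trans (hσp.1))) hγ0
    have h3 : 0 ≤ α * (σ (s, a) - σt) * ((1 - γ) * N) :=
      mul_nonneg (mul_nonneg hα0.le (sub_nonneg.2 hσp.1))
        (mul_nonneg (by linarith) hN0)
    constructor <;> nlinarith [mul_le_mul_of_nonneg_left hD'.2 hασ0,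
      mul_le_mul_of_nonneg_left hD'.1 hασ0,
      mul_le_mul_of_nonneg_left hE'.2 hασγ0,
      mul_le_mul_of_nonneg_left hE'.1 hασγ0, h3]
end

section
/- Let (S,A,P,r,γ) be a finite discounted MDP, π a policy, σ : S × A → ℝ with σ̃ ≤ σ(s,a) ≤ 1 for all (s,a) where σ̃ > 0, and 0 < α ≤ 1. Let Σ be the diagonal (S×A)×(S×A) matrix with entries σ(s,a), and let A^π = I − α·Σ·(I − γ·P^π). Then ‖A^π‖∞ ≤ 1 − α(1−γ)σ̃, where ‖M‖∞ denotes the ℓ∞ operator norm of a matrix M (maximum absolute row sum). -/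
/-- The ℓ∞ operator norm (maximum absolute row sum) of a square matrix. -/
noncomputable def linftyOpNorm {n : Type*} [Fintype n] (M : Matrix n n ℝ) : ℝ :=
  ⨆ i, ∑ j, |M i j|

/-- `‖I − αΣ(I − γP^π)‖∞ ≤ 1 − α(1-γ)σ̃`. -/
theorem weighted_bellman_matrix_norm_bound
    {S A : Type*} [Fintype S] [Fintype A] [Nonempty S] [Nonempty A]
    [DecidableEq S] [DecidableEq A]
    (P : S → A → S → ℝ) (hP0 : ∀ s a s', 0 ≤ P s a s')
    (hP1 : ∀ s a, ∑ s', P s a s' = 1)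
    (r : S → A → ℝ) (hr0 : ∀ s a, 0 ≤ r s a) (hr1 : ∀ s a, r s a ≤ 1)
    (γ : ℝ) (hγ0 : 0 ≤ γ) (hγ1 : γ < 1)
    (pol : S → A → ℝ) (hpol0 : ∀ s a, 0 ≤ pol s a) (hpol1 : ∀ s, ∑ a, pol s a = 1)
    (σ : S × A → ℝ) (σt : ℝ) (hσt : 0 < σt)
    (hσ : ∀ p, σt ≤ σ p ∧ σ p ≤ 1)
    (α : ℝ) (hα0 : 0 < α) (hα1 : α ≤ 1) :
    linftyOpNorm
        ((1 : Matrix (S × A) (S × A) ℝ)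
          - α • (Matrix.diagonal σ * (1 - γ • saMatrix P pol)))
      ≤ 1 - α * (1 - γ) * σt := by
  set M : Matrix (S × A) (S × A) ℝ :=
    (1 : Matrix (S × A) (S × A) ℝ)
      - α • (Matrix.diagonal σ * (1 - γ • saMatrix P pol)) with hM
  have hentry : ∀ i j : S × A, M i j =
      (if i = j then (1 : ℝ) else 0)
        - α * σ i * ((if i = j then (1 : ℝ) else 0)
            - γ * (P i.1 i.2 j.1 * pol j.1 j.2)) := by
    intro i j
    by_cases h : i = j <;>
      simp [hM, h, Matrix.sub_apply, Matrix.smul_apply, Matrix.diagonal_mul,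
        Matrix.diagonal_apply, Matrix.one_apply, saMatrix,
        mul_sub, mul_assoc, smul_eq_mul]
  have hPπ0 : ∀ i j : S × A, 0 ≤ P i.1 i.2 j.1 * pol j.1 j.2 := fun i j =>
    mul_nonneg (hP0 _ _ _) (hpol0 _ _)
  have hασ : ∀ i : S × A, α * σ i ≤ 1 := fun i =>
    le_trans (mul_le_mul hα1 (hσ i).2 (le_trans hσt.le (hσ i).1) zero_le_one)
      (by norm_num)
  have hασ0 : ∀ i : S × A, 0 ≤ α * σ i := fun i =>
    mul_nonneg hα0.le (le_trans hσt.le (hσ i).1)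
  have habs : ∀ i j : S × A, |M i j| =
      (if i = j then 1 - α * σ i else 0)
        + α * σ i * γ * (P i.1 i.2 j.1 * pol j.1 j.2) := by
    intro i j
    rw [hentry]
    by_cases h : i = j
    · simp only [h, if_pos rfl, if_true]
      rw [abs_of_nonneg]
      · ring
      · have : 0 ≤ α * σ j * (γ * (P j.1 j.2 j.1 * pol j.1 j.2)) :=
          mul_nonneg (hασ0 j) (mul_nonneg hγ0 (hPπ0 j j))
        nlinarith [hασ j]
    · simp only [if_neg h]
      rw [abs_of_nonneg]
      · ring
      · have : 0 ≤ α * σ i * (γ * (P i.1 i.2 j.1 * pol j.1 j.2)) :=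
          mul_nonneg (hασ0 i) (mul_nonneg hγ0 (hPπ0 i j))
        nlinarith
  have hrowPπ : ∀ i : S × A, ∑ j : S × A, P i.1 i.2 j.1 * pol j.1 j.2 = 1 := by
    intro i
    rw [Fintype.sum_prod_type]
    have : ∀ s' : S, ∑ a' : A, P i.1 i.2 s' * pol s' a' = P i.1 i.2 s' := by
      intro s'
      rw [← Finset.mul_sum, hpol1 s', mul_one]
    simp only [this]
    exact hP1 _ _
  have hrow : ∀ i : S × A, ∑ j, |M i j| = 1 - α * σ i * (1 - γ) := by
    intro i
    simp only [habs]
    rw [Finset.sum_add_distrib, Finset.sum_ite_eq (Finset.univ : Finset (S × A)) i,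
      if_pos (Finset.mem_univ i), ← Finset.mul_sum, hrowPπ i]
    ring
  rw [linftyOpNorm]
  apply ciSup_le
  intro i
  rw [hrow i]
  have : α * (1 - γ) * σt ≤ α * σ i * (1 - γ) := by
    have h1 : α * σt ≤ α * σ i := mul_le_mul_of_nonneg_left (hσ i).1 hα0.le
    nlinarith
  linarith
end

section
/- (Exact decomposition of the stochastic bias of TD-PMD.) Let (S,A,P,r,γ) be a finite discounted MDP, α ∈ ℝ, Σ the diagonal (S×A)×(S×A) matrix of an arbitrary function σ : S × A → ℝ, k ≥ 0 an integer, π*, π_0, …, π_k policies, ω_0, …, ω_{k−1} : S × A → ℝ, and Q^0, …, Q^k : S × A → ℝ satisfying the critic recursion Q^j = Q^{j−1} + α·Σ·(F^{π_j} Q^{j−1} − Q^{j−1}) + α·ω_{j−1} for 1 ≤ j ≤ k. For each j let Q^{π_j} be a fixed point of F^{π_j}, and set A_j = I − α·Σ·(I − γ·P^{π_j}). Then for every s ∈ S: ⟨π*(·|s) − π_k(·|s), Q^{π_k}(s,·) − Q^k(s,·)⟩ = B₀ + ∑_{j=1}^k (C_j + D_j + E_j − F_j), where B₀ = ⟨((A_0)^k)ᵀ·J_s·(π*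 − π_0), Q^{π_0} − Q^0⟩, C_j = ⟨((A_j)^{k−j+1})ᵀ·J_s·(π* − π_j), Q^{π_j} − Q^{π_{j−1}}⟩, D_j = ⟨((A_j)^{k−j+1})ᵀ·J_s·(π_{j−1} − π_j), Q^{π_{j−1}} − Q^{j−1}⟩, E_j = ⟨(((A_j)^{k−j+1}) − ((A_{j−1})^{k−j+1}))ᵀ·J_s·(π* − π_{j−1}), Q^{π_{j−1}} − Q^{j−1}⟩, and F_j = ⟨((A_j)^{k−j})ᵀ·J_s·(π* − π_j), α·ω_{j−1}⟩. -/
/-- The diagonal index matrix `J_s` selecting the rows/columns of state `s`. -/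
noncomputable def Jmat {S A : Type*} [Fintype S] [Fintype A] [DecidableEq S] [DecidableEq A]
    (s : S) : Matrix (S × A) (S × A) ℝ :=
  Matrix.diagonal fun p => if p.1 = s then 1 else 0


section TDPMDAux
open Matrix

variable {S A : Type*} [Fintype S] [Fintype A] [DecidableEq S] [DecidableEq A]

/-- auxiliary bilinear form. -/
noncomputable def Bform (s : S) (M : Matrix (S × A) (S × A) ℝ) (v u : S × A → ℝ) : ℝ :=
  ∑ p : S × A, ((Jmat s).mulVec v) p * (M.mulVec u) p

lemma Bform_eq (s : S) (M : Matrix (S × A) (S × A) ℝ) (v u : S × A → ℝ) :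
    (∑ p : S × A, (Matrix.transpose M).mulVec ((Jmat s).mulVec v) p * u p) = Bform s M v u := by
  have h : (Mᵀ.mulVec ((Jmat s).mulVec v)) ⬝ᵥ u = ((Jmat s).mulVec v) ⬝ᵥ (M.mulVec u) := by
    rw [Matrix.mulVec_transpose, Matrix.dotProduct_mulVec]
  exact h

lemma Bform_sub_right (s : S) (M : Matrix (S × A) (S × A) ℝ) (v u₁ u₂ : S × A → ℝ) :
    Bform s M v (u₁ - u₂) = Bform s M v u₁ - Bform s M v u₂ := by
  unfold Bform
  rw [Matrix.mulVec_sub, ← Finset.sum_sub_distrib]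
  exact Finset.sum_congr rfl fun p _ => by simp [mul_sub]

lemma Bform_add_right (s : S) (M : Matrix (S × A) (S × A) ℝ) (v u₁ u₂ : S × A → ℝ) :
    Bform s M v (u₁ + u₂) = Bform s M v u₁ + Bform s M v u₂ := by
  unfold Bform
  rw [Matrix.mulVec_add, ← Finset.sum_add_distrib]
  exact Finset.sum_congr rfl fun p _ => by simp [mul_add]

lemma Bform_add_vec (s : S) (M : Matrix (S × A) (S × A) ℝ) (v₁ v₂ u : S × A → ℝ) :
    Bform s M (v₁ + v₂) u = Bform s M v₁ u + Bform s M v₂ u := by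
  unfold Bform
  rw [Matrix.mulVec_add, ← Finset.sum_add_distrib]
  exact Finset.sum_congr rfl fun p _ => by simp [add_mul]

lemma Bform_add_mat (s : S) (M₁ M₂ : Matrix (S × A) (S × A) ℝ) (v u : S × A → ℝ) :
    Bform s (M₁ + M₂) v u = Bform s M₁ v u + Bform s M₂ v u := by
  unfold Bform
  rw [Matrix.add_mulVec, ← Finset.sum_add_distrib]
  exact Finset.sum_congr rfl fun p _ => by simp [mul_add]

lemma Bform_mulVec (s : S) (M N : Matrix (S × A) (S × A) ℝ) (v u : S × A → ℝ) :
    Bform s M v (N.mulVec u) = Bform s (M * N) v u := by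
  unfold Bform
  rw [Matrix.mulVec_mulVec]

lemma Bform_one (s : S) (v u : S × A → ℝ) :
    Bform s (1 : Matrix (S × A) (S × A) ℝ) v u = ∑ a : A, v (s, a) * u (s, a) := by
  unfold Bform
  rw [Matrix.one_mulVec, Fintype.sum_prod_type]
  have h1 : ∀ s' : S,
      (∑ a : A, ((Jmat s).mulVec v) (s', a) * u (s', a))
        = if s' = s then ∑ a : A, v (s', a) * u (s', a) else 0 := by
    intro s'
    by_cases h : s' = s
    · subst h; simp [Jmat, Matrix.mulVec_diagonal]
    · simp [Jmat, Matrix.mulVec_diagonal, h]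
  rw [Finset.sum_congr rfl fun s' _ => h1 s']
  simp

lemma tele_sum (f : ℕ → ℝ) (n : ℕ) :
    ∑ j ∈ Finset.Icc 1 n, (f j - f (j - 1)) = f n - f 0 := by
  induction n with
  | zero => simp
  | succ m ih =>
      rw [Finset.sum_Icc_succ_top (Nat.succ_le_succ (Nat.zero_le m)), ih]
      simp only [Nat.add_sub_cancel]
      ring

end TDPMDAux

/-- exact decomposition of the stochastic bias of TD-PMD. -/
theorem td_pmd_bias_decomposition
    {S A : Type*} [Fintype S] [Fintype A] [Nonempty S] [Nonempty A]
    [DecidableEq S] [DecidableEq A]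
    (P : S → A → S → ℝ) (hP0 : ∀ s a s', 0 ≤ P s a s')
    (hP1 : ∀ s a, ∑ s', P s a s' = 1)
    (r : S → A → ℝ) (hr0 : ∀ s a, 0 ≤ r s a) (hr1 : ∀ s a, r s a ≤ 1)
    (γ : ℝ) (hγ0 : 0 ≤ γ) (hγ1 : γ < 1)
    (α : ℝ) (σ : S × A → ℝ)
    (k : ℕ)
    (polstar : S → A → ℝ)
    (hstar0 : ∀ s a, 0 ≤ polstar s a) (hstar1 : ∀ s, ∑ a, polstar s a = 1)
    (pol : ℕ → S → A → ℝ)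
    (hpol0 : ∀ j ≤ k, ∀ s a, 0 ≤ pol j s a)
    (hpol1 : ∀ j ≤ k, ∀ s, ∑ a, pol j s a = 1)
    (ω : ℕ → S × A → ℝ)
    (Qc : ℕ → S × A → ℝ)
    (hrec : ∀ j, 1 ≤ j → j ≤ k → ∀ p : S × A,
      Qc j p = Qc (j - 1) p
        + α * (Matrix.diagonal σ).mulVec
            (fun q : S × A =>
              (r q.1 q.2 + γ * ∑ s', P q.1 q.2 s' *
                ∑ a', pol j s' a' * Qc (j - 1) (s', a')) - Qc (j - 1) q) p
        + α * ω (j - 1) p)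
    (Qpi : ℕ → S × A → ℝ)
    (hQpi : ∀ j ≤ k, ∀ s a,
      r s a + γ * ∑ s', P s a s' * ∑ a', pol j s' a' * Qpi j (s', a')
        = Qpi j (s, a)) :
    ∀ s : S,
      ∑ a, (polstar s a - pol k s a) * (Qpi k (s, a) - Qc k (s, a))
        = (∑ p : S × A,
            (Matrix.transpose
                (((1 : Matrix (S × A) (S × A) ℝ)
                  - α • (Matrix.diagonal σ
                      * (1 - γ • saMatrix P (pol 0)))) ^ k)).mulVec
              ((Jmat s).mulVec
                (fun q : S × A => polstar q.1 q.2 - pol 0 q.1 q.2)) p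
            * (Qpi 0 p - Qc 0 p))
        + ∑ j ∈ Finset.Icc 1 k,
            ((∑ p : S × A,
                (Matrix.transpose
                    (((1 : Matrix (S × A) (S × A) ℝ)
                      - α • (Matrix.diagonal σ
                          * (1 - γ • saMatrix P (pol j)))) ^ (k - j + 1))).mulVec
                  ((Jmat s).mulVec
                    (fun q : S × A => polstar q.1 q.2 - pol j q.1 q.2)) p
                * (Qpi j p - Qpi (j - 1) p))
            + (∑ p : S × A,
                (Matrix.transpose
                    (((1 : Matrix (S × A) (S × A) ℝ)
                      - α • (Matrix.diagonal σ
                          * (1 - γ • saMatrix P (pol j)))) ^ (k - j + 1))).mulVec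
                  ((Jmat s).mulVec
                    (fun q : S × A => pol (j - 1) q.1 q.2 - pol j q.1 q.2)) p
                * (Qpi (j - 1) p - Qc (j - 1) p))
            + (∑ p : S × A,
                (Matrix.transpose
                    ((((1 : Matrix (S × A) (S × A) ℝ)
                        - α • (Matrix.diagonal σ
                            * (1 - γ • saMatrix P (pol j)))) ^ (k - j + 1))
                      - (((1 : Matrix (S × A) (S × A) ℝ)
                          - α • (Matrix.diagonal σ
                              * (1 - γ • saMatrix P (pol (j - 1))))) ^ (k - j + 1)))).mulVec
                  ((Jmat s).mulVec
                    (fun q : S × A => polstar q.1 q.2 - pol (j - 1) q.1 q.2)) p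
                * (Qpi (j - 1) p - Qc (j - 1) p))
            - (∑ p : S × A,
                (Matrix.transpose
                    (((1 : Matrix (S × A) (S × A) ℝ)
                      - α • (Matrix.diagonal σ
                          * (1 - γ • saMatrix P (pol j)))) ^ (k - j))).mulVec
                  ((Jmat s).mulVec
                    (fun q : S × A => polstar q.1 q.2 - pol j q.1 q.2)) p
                * (α * ω (j - 1) p))) := by
  intro s
  -- notation shortcuts (definitional)
  have sumfac : ∀ (j : ℕ) (p : S × A) (u : S × A → ℝ),
      (saMatrix P (pol j)).mulVec u p
        = ∑ s', P p.1 p.2 s' * ∑ a', pol j s' a' * u (s', a') := by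
    intro j p u
    simp only [Matrix.mulVec, dotProduct, saMatrix, Matrix.of_apply]
    rw [Fintype.sum_prod_type]
    refine Finset.sum_congr rfl fun s' _ => ?_
    rw [Finset.mul_sum]
    exact Finset.sum_congr rfl fun a' _ => by ring
  -- key recursion in vector form
  have key : ∀ j, 1 ≤ j → j ≤ k →
      (fun p : S × A => Qpi j p - Qc j p)
        = ((1 : Matrix (S × A) (S × A) ℝ)
            - α • (Matrix.diagonal σ * (1 - γ • saMatrix P (pol j)))).mulVec
              (fun q : S × A => Qpi j q - Qc (j - 1) q)
          - α • ω (j - 1) := by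
    intro j hj1 hjk
    funext p
    obtain ⟨s1, a1⟩ := p
    have hr := hrec j hj1 hjk (s1, a1)
    have hq := hQpi j hjk s1 a1
    have hsplit : ∑ s', P s1 a1 s' * ∑ a', pol j s' a' *
          (Qpi j (s', a') - Qc (j - 1) (s', a'))
        = (∑ s', P s1 a1 s' * ∑ a', pol j s' a' * Qpi j (s', a'))
          - ∑ s', P s1 a1 s' * ∑ a', pol j s' a' * Qc (j - 1) (s', a') := by
      rw [← Finset.sum_sub_distrib]
      refine Finset.sum_congr rfl fun s' _ => ?_
      rw [← mul_sub, ← Finset.sum_sub_distrib]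
      congr 1
      exact Finset.sum_congr rfl fun a' _ => by ring
    simp only [Pi.sub_apply, Pi.smul_apply, smul_eq_mul, Matrix.sub_mulVec,
      Matrix.one_mulVec, Matrix.smul_mulVec, ← Matrix.mulVec_mulVec,
      Matrix.mulVec_diagonal, Matrix.mulVec_sub] at hr ⊢
    rw [sumfac]
    simp only at hr ⊢
    rw [hsplit]
    rw [hr]
    linear_combination (-(α * σ (s1, a1))) * hq
  -- rewrite goal in Bform terms
  simp only [Bform_eq]
  -- the step identity
  have hstep : ∀ j ∈ Finset.Icc 1 k,
      Bform s (((1 : Matrix (S × A) (S × A) ℝ)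
            - α • (Matrix.diagonal σ * (1 - γ • saMatrix P (pol j)))) ^ (k - j + 1))
          (fun q : S × A => polstar q.1 q.2 - pol j q.1 q.2)
          (fun p : S × A => Qpi j p - Qpi (j - 1) p)
        + Bform s (((1 : Matrix (S × A) (S × A) ℝ)
            - α • (Matrix.diagonal σ * (1 - γ • saMatrix P (pol j)))) ^ (k - j + 1))
          (fun q : S × A => pol (j - 1) q.1 q.2 - pol j q.1 q.2)
          (fun p : S × A => Qpi (j - 1) p - Qc (j - 1) p)
        + Bform s ((((1 : Matrix (S × A) (S × A) ℝ)
            - α • (Matrix.diagonal σ * (1 - γ • saMatrix P (pol j)))) ^ (k - j + 1))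
            - (((1 : Matrix (S × A) (S × A) ℝ)
            - α • (Matrix.diagonal σ * (1 - γ • saMatrix P (pol (j - 1))))) ^ (k - j + 1)))
          (fun q : S × A => polstar q.1 q.2 - pol (j - 1) q.1 q.2)
          (fun p : S × A => Qpi (j - 1) p - Qc (j - 1) p)
        - Bform s (((1 : Matrix (S × A) (S × A) ℝ)
            - α • (Matrix.diagonal σ * (1 - γ • saMatrix P (pol j)))) ^ (k - j))
          (fun q : S × A => polstar q.1 q.2 - pol j q.1 q.2)
          (fun p : S × A => α * ω (j - 1) p)
      = Bform s (((1 : Matrix (S × A) (S × A) ℝ)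
            - α • (Matrix.diagonal σ * (1 - γ • saMatrix P (pol j)))) ^ (k - j))
          (fun q : S × A => polstar q.1 q.2 - pol j q.1 q.2)
          (fun p : S × A => Qpi j p - Qc j p)
        - Bform s (((1 : Matrix (S × A) (S × A) ℝ)
            - α • (Matrix.diagonal σ * (1 - γ • saMatrix P (pol (j - 1))))) ^ (k - (j - 1)))
          (fun q : S × A => polstar q.1 q.2 - pol (j - 1) q.1 q.2)
          (fun p : S × A => Qpi (j - 1) p - Qc (j - 1) p) := by
    intro j hj
    rw [Finset.mem_Icc] at hj
    obtain ⟨hj1, hjk⟩ := hj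
    have hkj : k - j + 1 = k - (j - 1) := by omega
    have hω : (fun p : S × A => α * ω (j - 1) p) = α • ω (j - 1) := rfl
    have e1 : Bform s (((1 : Matrix (S × A) (S × A) ℝ)
            - α • (Matrix.diagonal σ * (1 - γ • saMatrix P (pol j)))) ^ (k - j))
          (fun q : S × A => polstar q.1 q.2 - pol j q.1 q.2)
          (fun p : S × A => Qpi j p - Qc j p)
        = Bform s (((1 : Matrix (S × A) (S × A) ℝ)
            - α • (Matrix.diagonal σ * (1 - γ • saMatrix P (pol j)))) ^ (k - j + 1))
          (fun q : S × A => polstar q.1 q.2 - pol j q.1 q.2)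
          (fun q : S × A => Qpi j q - Qc (j - 1) q)
        - Bform s (((1 : Matrix (S × A) (S × A) ℝ)
            - α • (Matrix.diagonal σ * (1 - γ • saMatrix P (pol j)))) ^ (k - j))
          (fun q : S × A => polstar q.1 q.2 - pol j q.1 q.2)
          (fun p : S × A => α * ω (j - 1) p) := by
      rw [key j hj1 hjk, Bform_sub_right, Bform_mulVec, ← pow_succ, hω]
    have e2 : (fun q : S × A => Qpi j q - Qc (j - 1) q)
        = (fun p : S × A => Qpi j p - Qpi (j - 1) p)
          + (fun p : S × A => Qpi (j - 1) p - Qc (j - 1) p) := by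
      funext p; simp only [Pi.add_apply]; ring
    have e3 : (fun q : S × A => polstar q.1 q.2 - pol j q.1 q.2)
        = (fun q : S × A => pol (j - 1) q.1 q.2 - pol j q.1 q.2)
          + (fun q : S × A => polstar q.1 q.2 - pol (j - 1) q.1 q.2) := by
      funext p; simp only [Pi.add_apply]; ring
    have step1 : Bform s (((1 : Matrix (S × A) (S × A) ℝ)
            - α • (Matrix.diagonal σ * (1 - γ • saMatrix P (pol j)))) ^ (k - j + 1))
          (fun q : S × A => polstar q.1 q.2 - pol j q.1 q.2)
          (fun q : S × A => Qpi j q - Qc (j - 1) q)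
        = Bform s (((1 : Matrix (S × A) (S × A) ℝ)
            - α • (Matrix.diagonal σ * (1 - γ • saMatrix P (pol j)))) ^ (k - j + 1))
          (fun q : S × A => polstar q.1 q.2 - pol j q.1 q.2)
          (fun p : S × A => Qpi j p - Qpi (j - 1) p)
        + Bform s (((1 : Matrix (S × A) (S × A) ℝ)
            - α • (Matrix.diagonal σ * (1 - γ • saMatrix P (pol j)))) ^ (k - j + 1))
          (fun q : S × A => polstar q.1 q.2 - pol j q.1 q.2)
          (fun p : S × A => Qpi (j - 1) p - Qc (j - 1) p) := by
      rw [e2, Bform_add_right]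
    have step2 : Bform s (((1 : Matrix (S × A) (S × A) ℝ)
            - α • (Matrix.diagonal σ * (1 - γ • saMatrix P (pol j)))) ^ (k - j + 1))
          (fun q : S × A => polstar q.1 q.2 - pol j q.1 q.2)
          (fun p : S × A => Qpi (j - 1) p - Qc (j - 1) p)
        = Bform s (((1 : Matrix (S × A) (S × A) ℝ)
            - α • (Matrix.diagonal σ * (1 - γ • saMatrix P (pol j)))) ^ (k - j + 1))
          (fun q : S × A => pol (j - 1) q.1 q.2 - pol j q.1 q.2)
          (fun p : S × A => Qpi (j - 1) p - Qc (j - 1) p)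
        + Bform s (((1 : Matrix (S × A) (S × A) ℝ)
            - α • (Matrix.diagonal σ * (1 - γ • saMatrix P (pol j)))) ^ (k - j + 1))
          (fun q : S × A => polstar q.1 q.2 - pol (j - 1) q.1 q.2)
          (fun p : S × A => Qpi (j - 1) p - Qc (j - 1) p) := by
      rw [e3, Bform_add_vec]
    have step3 : Bform s (((1 : Matrix (S × A) (S × A) ℝ)
            - α • (Matrix.diagonal σ * (1 - γ • saMatrix P (pol j)))) ^ (k - j + 1))
          (fun q : S × A => polstar q.1 q.2 - pol (j - 1) q.1 q.2)
          (fun p : S × A => Qpi (j - 1) p - Qc (j - 1) p)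
        = Bform s ((((1 : Matrix (S × A) (S × A) ℝ)
            - α • (Matrix.diagonal σ * (1 - γ • saMatrix P (pol j)))) ^ (k - j + 1))
            - (((1 : Matrix (S × A) (S × A) ℝ)
            - α • (Matrix.diagonal σ * (1 - γ • saMatrix P (pol (j - 1))))) ^ (k - j + 1)))
          (fun q : S × A => polstar q.1 q.2 - pol (j - 1) q.1 q.2)
          (fun p : S × A => Qpi (j - 1) p - Qc (j - 1) p)
        + Bform s (((1 : Matrix (S × A) (S × A) ℝ)
            - α • (Matrix.diagonal σ * (1 - γ • saMatrix P (pol (j - 1))))) ^ (k - (j - 1)))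
          (fun q : S × A => polstar q.1 q.2 - pol (j - 1) q.1 q.2)
          (fun p : S × A => Qpi (j - 1) p - Qc (j - 1) p) := by
      conv_lhs =>
        rw [show (((1 : Matrix (S × A) (S × A) ℝ)
            - α • (Matrix.diagonal σ * (1 - γ • saMatrix P (pol j)))) ^ (k - j + 1))
          = ((((1 : Matrix (S × A) (S × A) ℝ)
            - α • (Matrix.diagonal σ * (1 - γ • saMatrix P (pol j)))) ^ (k - j + 1))
            - (((1 : Matrix (S × A) (S × A) ℝ)
            - α • (Matrix.diagonal σ * (1 - γ • saMatrix P (pol (j - 1))))) ^ (k - j + 1)))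
            + (((1 : Matrix (S × A) (S × A) ℝ)
            - α • (Matrix.diagonal σ * (1 - γ • saMatrix P (pol (j - 1))))) ^ (k - j + 1))
          from (sub_add_cancel _ _).symm]
      rw [Bform_add_mat, hkj]
    linarith [e1, step1, step2, step3]
  rw [Finset.sum_congr rfl hstep]
  have htele := tele_sum (fun j => Bform s (((1 : Matrix (S × A) (S × A) ℝ)
            - α • (Matrix.diagonal σ * (1 - γ • saMatrix P (pol j)))) ^ (k - j))
          (fun q : S × A => polstar q.1 q.2 - pol j q.1 q.2)
          (fun p : S × A => Qpi j p - Qc j p)) k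
  simp only [Nat.sub_zero] at htele
  rw [htele]
  have hTk : Bform s (((1 : Matrix (S × A) (S × A) ℝ)
            - α • (Matrix.diagonal σ * (1 - γ • saMatrix P (pol k)))) ^ (k - k))
          (fun q : S × A => polstar q.1 q.2 - pol k q.1 q.2)
          (fun p : S × A => Qpi k p - Qc k p)
      = ∑ a, (polstar s a - pol k s a) * (Qpi k (s, a) - Qc k (s, a)) := by
    rw [Nat.sub_self, pow_zero, Bform_one]
  rw [← hTk]
  ring
end

section
/- (Bounds on the C- and D-terms of the bias decomposition.) Let (S,A,P,r,γ) be a finite discounted MDP, 0 < α ≤ 1, 0 < σ̃ ≤ 1, and set q = 1 − α(1−γ)σ̃. Let η > 0, λ > 0, k ≥ 1 an integer, and let π*, π_0, …, π_k be policies with ‖π_j − π_{j−1}‖∞ ≤ |A|·η/(λ(1−γ)) for 1 ≤ j ≤ k. For each j let Q^{π_j} be a fixed point of F^{π_j}, let A_1,…,A_k be (S×A)×(S×A) matrices with ‖A_j‖∞ ≤ q, and let Q^0,…,Q^{k−1} : S × A → ℝ satisfy ‖Q^{π_{j−1}} − Q^{j−1}‖∞ ≤ 1/(1−γ) for 1 ≤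 j ≤ k. Then for every s ∈ S: ∑_{j=1}^k |⟨((A_j)^{k−j+1})ᵀ·J_s·(π* − π_j), Q^{π_j} − Q^{π_{j−1}}⟩| ≤ 2γ·|A|²·η/(α·λ·σ̃·(1−γ)⁴), and ∑_{j=1}^k |⟨((A_j)^{k−j+1})ᵀ·J_s·(π_{j−1} − π_j), Q^{π_{j−1}} − Q^{j−1}⟩| ≤ |A|²·η/(α·λ·σ̃·(1−γ)³). -/
open Finset

section Helpers

lemma weighted_abs_le {ι : Type*} [Fintype ι] (w f : ι → ℝ) (C : ℝ)
    (hw0 : ∀ i, 0 ≤ w i) (hw1 : ∑ i, w i = 1) (hf : ∀ i, |f i| ≤ C) :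
    |∑ i, w i * f i| ≤ C := by
  calc |∑ i, w i * f i| ≤ ∑ i, |w i * f i| := Finset.abs_sum_le_sum_abs _ _
    _ = ∑ i, w i * |f i| := by
        refine Finset.sum_congr rfl fun i _ => ?_
        rw [abs_mul, abs_of_nonneg (hw0 i)]
    _ ≤ ∑ i, w i * C := Finset.sum_le_sum fun i _ => mul_le_mul_of_nonneg_left (hf i) (hw0 i)
    _ = C := by rw [← Finset.sum_mul, hw1, one_mul]

lemma rowsum_mulVec_bound {n : Type*} [Fintype n] (M : Matrix n n ℝ) (q d : ℝ)
    (hM : ∀ i, ∑ j, |M i j| ≤ q) (v : n → ℝ) (hv : ∀ j, |v j| ≤ d) (hd : 0 ≤ d) (i : n) :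
    |M.mulVec v i| ≤ q * d := by
  calc |M.mulVec v i| = |∑ j, M i j * v j| := by simp [Matrix.mulVec, dotProduct]
    _ ≤ ∑ j, |M i j * v j| := Finset.abs_sum_le_sum_abs _ _
    _ ≤ ∑ j, |M i j| * d := by
        refine Finset.sum_le_sum fun j _ => ?_
        rw [abs_mul]
        exact mul_le_mul_of_nonneg_left (hv j) (abs_nonneg _)
    _ = (∑ j, |M i j|) * d := (Finset.sum_mul ..).symm
    _ ≤ q * d := mul_le_mul_of_nonneg_right (hM i) hd

lemma pow_mulVec_bound {n : Type*} [Fintype n] [DecidableEq n] (M : Matrix n n ℝ) (q d : ℝ)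
    (hq : 0 ≤ q) (hM : ∀ i, ∑ j, |M i j| ≤ q) (v : n → ℝ) (hv : ∀ j, |v j| ≤ d) (hd : 0 ≤ d)
    (m : ℕ) : ∀ i, |(M ^ m).mulVec v i| ≤ q ^ m * d := by
  induction m with
  | zero => simpa [Matrix.one_mulVec] using hv
  | succ m ih =>
    intro i
    have h1 : (M ^ (m+1)).mulVec v = M.mulVec ((M ^ m).mulVec v) := by
      rw [pow_succ', Matrix.mulVec_mulVec]
    rw [h1]
    calc |M.mulVec ((M ^ m).mulVec v) i| ≤ q * (q ^ m * d) :=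
          rowsum_mulVec_bound M q (q ^ m * d) hM _ ih (by positivity) i
      _ = q ^ (m+1) * d := by ring

lemma transpose_mulVec_inner {n : Type*} [Fintype n] (N : Matrix n n ℝ) (u w : n → ℝ) :
    ∑ p, N.transpose.mulVec u p * w p = ∑ q, u q * N.mulVec w q := by
  simp only [Matrix.mulVec, dotProduct, Matrix.transpose_apply, Finset.sum_mul,
    Finset.mul_sum]
  rw [Finset.sum_comm]
  exact Finset.sum_congr rfl fun i _ => Finset.sum_congr rfl fun j _ => by ring

lemma geom_icc_sum_le (q : ℝ) (hq0 : 0 ≤ q) (hq1 : q < 1) (k : ℕ) :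
    ∑ j ∈ Finset.Icc 1 k, q ^ (k - j + 1) ≤ 1 / (1 - q) := by
  have hpos : (0:ℝ) < 1 - q := by linarith
  have h1 : ∑ j ∈ Finset.Icc 1 k, q ^ (k - j + 1)
      = ∑ i ∈ Finset.range k, q ^ (k - (1 + i) + 1) := by
    rw [← Finset.Ico_add_one_right_eq_Icc, Finset.sum_Ico_eq_sum_range]
    simp
  have h2 : ∑ i ∈ Finset.range k, q ^ (k - (1 + i) + 1)
      = ∑ i ∈ Finset.range k, q ^ (i + 1) := by
    rw [← Finset.sum_range_reflect (fun i => q ^ (i + 1)) k]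
    refine Finset.sum_congr rfl fun i hi => ?_
    have hik : i < k := Finset.mem_range.mp hi
    congr 1
    omega
  have h3 : ∑ i ∈ Finset.range k, q ^ (i + 1) ≤ ∑ i ∈ Finset.range k, q ^ i :=
    Finset.sum_le_sum fun i _ => pow_le_pow_of_le_one hq0 hq1.le (Nat.le_succ i)
  have h4 : ∑ i ∈ Finset.range k, q ^ i ≤ 1 / (1 - q) := by
    rw [geom_sum_eq hq1.ne k]
    have he : (q ^ k - 1) / (q - 1) = (1 - q ^ k) / (1 - q) := by
      rw [div_eq_div_iff (sub_ne_zero.mpr hq1.ne) hpos.ne']; ring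
    rw [he]
    gcongr
    nlinarith [pow_nonneg hq0 k]
  linarith [h1, h2, h3, h4]

lemma fixed_point_bound {S A : Type*} [Fintype S] [Fintype A]
    (P : S → A → S → ℝ) (hP0 : ∀ s a s', 0 ≤ P s a s') (hP1 : ∀ s a, ∑ s', P s a s' = 1)
    (r : S → A → ℝ) (hr0 : ∀ s a, 0 ≤ r s a) (hr1 : ∀ s a, r s a ≤ 1)
    (γ : ℝ) (hγ0 : 0 ≤ γ) (hγ1 : γ < 1)
    (π : S → A → ℝ) (hπ0 : ∀ s a, 0 ≤ π s a) (hπ1 : ∀ s, ∑ a, π s a = 1)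
    (Q : S × A → ℝ)
    (hQ : ∀ s a, r s a + γ * ∑ s', P s a s' * ∑ a', π s' a' * Q (s', a') = Q (s, a)) :
    ∀ p, |Q p| ≤ 1 / (1 - γ) := by
  set C := ‖Q‖ with hCdef
  have hC0 : 0 ≤ C := norm_nonneg _
  have hCle : ∀ p, |Q p| ≤ C := fun p => by
    rw [← Real.norm_eq_abs]; exact norm_le_pi_norm Q p
  have hstep : C ≤ 1 + γ * C := by
    rw [hCdef, pi_norm_le_iff_of_nonneg (by positivity)]
    rintro ⟨s, a⟩
    rw [Real.norm_eq_abs, ← hQ s a]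
    have hinner : ∀ s', |∑ a', π s' a' * Q (s', a')| ≤ C :=
      fun s' => weighted_abs_le _ _ C (hπ0 s') (hπ1 s') (fun a' => hCle _)
    have houter : |∑ s', P s a s' * ∑ a', π s' a' * Q (s', a')| ≤ C :=
      weighted_abs_le _ _ C (hP0 s a) (hP1 s a) hinner
    calc |r s a + γ * ∑ s', P s a s' * ∑ a', π s' a' * Q (s', a')|
        ≤ |r s a| + |γ * ∑ s', P s a s' * ∑ a', π s' a' * Q (s', a')| := abs_add_le _ _
      _ ≤ 1 + γ * C := by
          have h1 : |r s a| ≤ 1 := abs_le.mpr ⟨by linarith [hr0 s a], hr1 s a⟩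
          have h2 : |γ * ∑ s', P s a s' * ∑ a', π s' a' * Q (s', a')| ≤ γ * C := by
            rw [abs_mul, abs_of_nonneg hγ0]
            exact mul_le_mul_of_nonneg_left houter hγ0
          linarith
  intro p
  refine (hCle p).trans ?_
  rw [le_div_iff₀ (by linarith)]
  nlinarith

lemma fixed_point_diff_bound {S A : Type*} [Fintype S] [Fintype A]
    (P : S → A → S → ℝ) (hP0 : ∀ s a s', 0 ≤ P s a s') (hP1 : ∀ s a, ∑ s', P s a s' = 1)
    (r : S → A → ℝ) (hr0 : ∀ s a, 0 ≤ r s a) (hr1 : ∀ s a, r s a ≤ 1)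
    (γ : ℝ) (hγ0 : 0 ≤ γ) (hγ1 : γ < 1)
    (π π' : S → A → ℝ) (hπ0 : ∀ s a, 0 ≤ π s a) (hπ1 : ∀ s, ∑ a, π s a = 1)
    (hπ'0 : ∀ s a, 0 ≤ π' s a) (hπ'1 : ∀ s, ∑ a, π' s a = 1)
    (Q Q' : S × A → ℝ)
    (hQ : ∀ s a, r s a + γ * ∑ s', P s a s' * ∑ a', π s' a' * Q (s', a') = Q (s, a))
    (hQ' : ∀ s a, r s a + γ * ∑ s', P s a s' * ∑ a', π' s' a' * Q' (s', a') = Q' (s, a))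
    (ε : ℝ) (hε0 : 0 ≤ ε) (hε : ∀ s a, |π s a - π' s a| ≤ ε) :
    ∀ p, |Q p - Q' p| ≤ γ * (Fintype.card A : ℝ) * ε / (1 - γ) ^ 2 := by
  have hQ'b : ∀ p, |Q' p| ≤ 1 / (1 - γ) :=
    fixed_point_bound P hP0 hP1 r hr0 hr1 γ hγ0 hγ1 π' hπ'0 hπ'1 Q' hQ'
  set D := ‖fun p => Q p - Q' p‖ with hDdef
  have hD0 : 0 ≤ D := norm_nonneg _
  have hDle : ∀ p, |Q p - Q' p| ≤ D := fun p => by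
    rw [← Real.norm_eq_abs]; exact norm_le_pi_norm (fun p => Q p - Q' p) p
  set cA := (Fintype.card A : ℝ) with hcA
  have hcA0 : (0:ℝ) ≤ cA := Nat.cast_nonneg _
  have h1γ : (0:ℝ) < 1 - γ := by linarith
  have hinvpos : (0:ℝ) ≤ 1 / (1 - γ) := by positivity
  set B := D + cA * ε * (1 / (1 - γ)) with hBdef
  clear_value cA B
  have hB0 : 0 ≤ B := by
    have h : 0 ≤ cA * ε * (1 / (1 - γ)) := by positivity
    linarith
  have hin : ∀ s', (∑ a', π s' a' * (Q (s', a') - Q' (s', a')))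
        + ∑ a', (π s' a' - π' s' a') * Q' (s', a')
      = (∑ a', π s' a' * Q (s', a')) - ∑ a', π' s' a' * Q' (s', a') := by
    intro s'
    rw [← Finset.sum_add_distrib, ← Finset.sum_sub_distrib]
    exact Finset.sum_congr rfl fun a' _ => by ring
  have hstep : D ≤ γ * B := by
    rw [hDdef, pi_norm_le_iff_of_nonneg (mul_nonneg hγ0 hB0)]
    rintro ⟨s, a⟩
    rw [Real.norm_eq_abs]
    have heq : Q (s, a) - Q' (s, a)
        = γ * ∑ s', P s a s' *
            ((∑ a', π s' a' * (Q (s', a') - Q' (s', a')))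
              + ∑ a', (π s' a' - π' s' a') * Q' (s', a')) := by
      simp only [hin]
      rw [← hQ s a, ← hQ' s a]
      simp only [mul_sub, Finset.sum_sub_distrib]
      ring
    rw [heq, abs_mul, abs_of_nonneg hγ0]
    refine mul_le_mul_of_nonneg_left ?_ hγ0
    refine weighted_abs_le _ _ B (hP0 s a) (hP1 s a) fun s' => ?_
    have hX : |∑ a', π s' a' * (Q (s', a') - Q' (s', a'))| ≤ D :=
      weighted_abs_le _ _ D (hπ0 s') (hπ1 s') fun a' => hDle _
    have hZ : |∑ a', (π s' a' - π' s' a') * Q' (s', a')| ≤ cA * ε * (1 / (1 - γ)) := by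
      calc |∑ a', (π s' a' - π' s' a') * Q' (s', a')|
          ≤ ∑ a', |(π s' a' - π' s' a') * Q' (s', a')| := Finset.abs_sum_le_sum_abs _ _
        _ ≤ ∑ a' : A, ε * (1 / (1 - γ)) := by
            refine Finset.sum_le_sum fun a' _ => ?_
            rw [abs_mul]
            exact mul_le_mul (hε s' a') (hQ'b _) (abs_nonneg _) hε0
        _ = cA * ε * (1 / (1 - γ)) := by
            rw [Finset.sum_const, Finset.card_univ, nsmul_eq_mul, hcA]; ring
    calc |(∑ a', π s' a' * (Q (s', a') - Q' (s', a')))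
            + ∑ a', (π s' a' - π' s' a') * Q' (s', a')|
        ≤ |∑ a', π s' a' * (Q (s', a') - Q' (s', a'))|
            + |∑ a', (π s' a' - π' s' a') * Q' (s', a')| := abs_add_le _ _
      _ ≤ B := by rw [hBdef]; linarith
  intro p
  refine (hDle p).trans ?_
  have key : D * (1 - γ) ≤ γ * cA * ε * (1 / (1 - γ)) := by
    rw [hBdef] at hstep; nlinarith
  rw [le_div_iff₀ (by positivity : (0:ℝ) < (1 - γ) ^ 2)]
  have key2 : D * (1 - γ) * (1 - γ) ≤ γ * cA * ε * (1 / (1 - γ)) * (1 - γ) :=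
    mul_le_mul_of_nonneg_right key h1γ.le
  have key3 : γ * cA * ε * (1 / (1 - γ)) * (1 - γ) = γ * cA * ε := by
    field_simp
  calc D * (1 - γ) ^ 2 = D * (1 - γ) * (1 - γ) := by ring
    _ ≤ γ * cA * ε * (1 / (1 - γ)) * (1 - γ) := key2
    _ = γ * cA * ε := key3

end Helpers

lemma term_bound {S A : Type*} [Fintype S] [Fintype A] [DecidableEq S] [DecidableEq A]
    (M : Matrix (S × A) (S × A) ℝ) (q : ℝ) (hq0 : 0 ≤ q)
    (hM : ∀ i, ∑ j, |M i j| ≤ q) (m : ℕ)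
    (s : S) (v w : S × A → ℝ) (c d : ℝ) (hc : ∑ a, |v (s, a)| ≤ c)
    (hd0 : 0 ≤ d) (hw : ∀ p, |w p| ≤ d) :
    |∑ p, (Matrix.transpose (M ^ m)).mulVec ((Jmat s).mulVec v) p * w p|
      ≤ c * (q ^ m * d) := by
  rw [transpose_mulVec_inner]
  have hpow := pow_mulVec_bound M q d hq0 hM w hw hd0 m
  have hJ : ∀ p : S × A, (Jmat s).mulVec v p = (if p.1 = s then 1 else 0) * v p := by
    intro p
    simp [Jmat, Matrix.mulVec_diagonal]
  calc |∑ p, (Jmat s).mulVec v p * (M ^ m).mulVec w p|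
      ≤ ∑ p, |(Jmat s).mulVec v p * (M ^ m).mulVec w p| := Finset.abs_sum_le_sum_abs _ _
    _ ≤ ∑ p, |(Jmat s).mulVec v p| * (q ^ m * d) := by
        refine Finset.sum_le_sum fun p _ => ?_
        rw [abs_mul]
        exact mul_le_mul_of_nonneg_left (hpow p) (abs_nonneg _)
    _ = (∑ p : S × A, |(Jmat s).mulVec v p|) * (q ^ m * d) := (Finset.sum_mul ..).symm
    _ ≤ c * (q ^ m * d) := by
        refine mul_le_mul_of_nonneg_right ?_ (by positivity)
        calc ∑ p : S × A, |(Jmat s).mulVec v p|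
            = ∑ s' : S, ∑ a : A, |(if s' = s then 1 else 0 : ℝ) * v (s', a)| := by
              rw [Fintype.sum_prod_type]
              exact Finset.sum_congr rfl fun s' _ => Finset.sum_congr rfl fun a _ => by
                rw [hJ (s', a)]
          _ = ∑ a : A, |v (s, a)| := by
              rw [Finset.sum_eq_single s]
              · simp
              · intro s' _ hne
                simp [hne]
              · simp
          _ ≤ c := hc

/-- Bounds on the `C`- and `D`-terms of the bias decomposition. -/
theorem CD_terms_bound
    {S A : Type*} [Fintype S] [Fintype A] [Nonempty S] [Nonempty A]
    [DecidableEq S] [DecidableEq A]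
    (P : S → A → S → ℝ) (hP0 : ∀ s a s', 0 ≤ P s a s')
    (hP1 : ∀ s a, ∑ s', P s a s' = 1)
    (r : S → A → ℝ) (hr0 : ∀ s a, 0 ≤ r s a) (hr1 : ∀ s a, r s a ≤ 1)
    (γ : ℝ) (hγ0 : 0 ≤ γ) (hγ1 : γ < 1)
    (α σt : ℝ) (hα0 : 0 < α) (hα1 : α ≤ 1) (hσt0 : 0 < σt) (hσt1 : σt ≤ 1)
    (η lam : ℝ) (hη : 0 < η) (hlam : 0 < lam)
    (k : ℕ) (hk : 1 ≤ k)
    (polstar : S → A → ℝ)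
    (hstar0 : ∀ s a, 0 ≤ polstar s a) (hstar1 : ∀ s, ∑ a, polstar s a = 1)
    (pol : ℕ → S → A → ℝ)
    (hpol0 : ∀ j ≤ k, ∀ s a, 0 ≤ pol j s a)
    (hpol1 : ∀ j ≤ k, ∀ s, ∑ a, pol j s a = 1)
    (hshift : ∀ j, 1 ≤ j → j ≤ k →
      ‖(fun p : S × A => pol j p.1 p.2 - pol (j - 1) p.1 p.2)‖
        ≤ (Fintype.card A : ℝ) * η / (lam * (1 - γ)))
    (Qpi : ℕ → S × A → ℝ)
    (hQpi : ∀ j ≤ k, ∀ s a,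
      r s a + γ * ∑ s', P s a s' * ∑ a', pol j s' a' * Qpi j (s', a')
        = Qpi j (s, a))
    (Amat : ℕ → Matrix (S × A) (S × A) ℝ)
    (hAmat : ∀ j, 1 ≤ j → j ≤ k →
      linftyOpNorm (Amat j) ≤ 1 - α * (1 - γ) * σt)
    (Qc : ℕ → S × A → ℝ)
    (hQc : ∀ j, 1 ≤ j → j ≤ k →
      ‖(fun p : S × A => Qpi (j - 1) p - Qc (j - 1) p)‖ ≤ 1 / (1 - γ)) :
    ∀ s : S,
      (∑ j ∈ Finset.Icc 1 k,
          |∑ p : S × A,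
              (Matrix.transpose ((Amat j) ^ (k - j + 1))).mulVec
                ((Jmat s).mulVec
                  (fun q : S × A => polstar q.1 q.2 - pol j q.1 q.2)) p
              * (Qpi j p - Qpi (j - 1) p)|)
        ≤ 2 * γ * (Fintype.card A : ℝ) ^ 2 * η
            / (α * lam * σt * (1 - γ) ^ 4) ∧
      (∑ j ∈ Finset.Icc 1 k,
          |∑ p : S × A,
              (Matrix.transpose ((Amat j) ^ (k - j + 1))).mulVec
                ((Jmat s).mulVec
                  (fun q : S × A => pol (j - 1) q.1 q.2 - pol j q.1 q.2)) p
              * (Qpi (j - 1) p - Qc (j - 1) p)|)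
        ≤ (Fintype.card A : ℝ) ^ 2 * η / (α * lam * σt * (1 - γ) ^ 3) := by
  intro s
  have h1γ : (0:ℝ) < 1 - γ := by linarith
  have hcA0 : (0:ℝ) ≤ (Fintype.card A : ℝ) := Nat.cast_nonneg _
  -- the contraction factor
  have haux : α * σt * (1 - γ) ≤ 1 - γ := by
    have h1 : α * σt ≤ 1 := mul_le_one₀ hα1 hσt0.le hσt1
    nlinarith
  have hq0 : (0:ℝ) ≤ 1 - α * (1 - γ) * σt := by nlinarith
  have hq1 : 1 - α * (1 - γ) * σt < 1 := by
    have := mul_pos (mul_pos hα0 h1γ) hσt0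
    linarith
  have h1mq : 1 - (1 - α * (1 - γ) * σt) = α * (1 - γ) * σt := by ring
  have hrow : ∀ j, 1 ≤ j → j ≤ k → ∀ i, ∑ j', |Amat j i j'| ≤ 1 - α * (1 - γ) * σt := by
    intro j hj1 hjk i
    refine le_trans ?_ (hAmat j hj1 hjk)
    rw [linftyOpNorm]
    exact le_ciSup (f := fun i => ∑ j', |Amat j i j'|) (Set.Finite.bddAbove (Set.finite_range _)) i
  -- pointwise shift bound
  have hε00 : (0:ℝ) ≤ (Fintype.card A : ℝ) * η / (lam * (1 - γ)) := by positivity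
  have hshiftpt : ∀ j, 1 ≤ j → j ≤ k → ∀ s' a,
      |pol j s' a - pol (j - 1) s' a| ≤ (Fintype.card A : ℝ) * η / (lam * (1 - γ)) := by
    intro j hj1 hjk s' a
    have h := norm_le_pi_norm (fun p : S × A => pol j p.1 p.2 - pol (j - 1) p.1 p.2) (s', a)
    rw [Real.norm_eq_abs] at h
    exact h.trans (hshift j hj1 hjk)
  -- bound on Q-function differences
  have hdC0 : (0:ℝ) ≤ γ * (Fintype.card A : ℝ) *
      ((Fintype.card A : ℝ) * η / (lam * (1 - γ))) / (1 - γ) ^ 2 := by positivity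
  have hQdiff : ∀ j, 1 ≤ j → j ≤ k → ∀ p,
      |Qpi j p - Qpi (j - 1) p| ≤ γ * (Fintype.card A : ℝ) *
        ((Fintype.card A : ℝ) * η / (lam * (1 - γ))) / (1 - γ) ^ 2 := by
    intro j hj1 hjk
    exact fixed_point_diff_bound P hP0 hP1 r hr0 hr1 γ hγ0 hγ1 (pol j) (pol (j - 1))
      (hpol0 j hjk) (hpol1 j hjk)
      (hpol0 (j - 1) (le_trans (Nat.sub_le j 1) hjk))
      (hpol1 (j - 1) (le_trans (Nat.sub_le j 1) hjk))
      (Qpi j) (Qpi (j - 1)) (hQpi j hjk) (hQpi (j - 1) (le_trans (Nat.sub_le j 1) hjk))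
      _ hε00 (hshiftpt j hj1 hjk)
  constructor
  · -- C-term
    have hCterm : ∀ j ∈ Finset.Icc 1 k,
        |∑ p : S × A,
            (Matrix.transpose ((Amat j) ^ (k - j + 1))).mulVec
              ((Jmat s).mulVec
                (fun q : S × A => polstar q.1 q.2 - pol j q.1 q.2)) p
            * (Qpi j p - Qpi (j - 1) p)|
          ≤ 2 * ((1 - α * (1 - γ) * σt) ^ (k - j + 1) *
              (γ * (Fintype.card A : ℝ) *
                ((Fintype.card A : ℝ) * η / (lam * (1 - γ))) / (1 - γ) ^ 2)) := by
      intro j hj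
      obtain ⟨hj1, hjk⟩ := Finset.mem_Icc.mp hj
      refine term_bound (Amat j) _ hq0 (hrow j hj1 hjk) (k - j + 1) s _ _ 2 _
        ?_ hdC0 (hQdiff j hj1 hjk)
      calc ∑ a, |polstar s a - pol j s a|
          ≤ ∑ a, (polstar s a + pol j s a) := by
            refine Finset.sum_le_sum fun a _ => ?_
            calc |polstar s a - pol j s a| = |polstar s a + -(pol j s a)| := by
                  rw [sub_eq_add_neg]
              _ ≤ |polstar s a| + |-(pol j s a)| := abs_add_le _ _
              _ = polstar s a + pol j s a := by
                  rw [abs_neg, abs_of_nonneg (hstar0 s a), abs_of_nonneg (hpol0 j hjk s a)]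
        _ = 2 := by rw [Finset.sum_add_distrib, hstar1 s, hpol1 j hjk s]; norm_num
    calc (∑ j ∈ Finset.Icc 1 k, |_|)
        ≤ ∑ j ∈ Finset.Icc 1 k, 2 * ((1 - α * (1 - γ) * σt) ^ (k - j + 1) *
            (γ * (Fintype.card A : ℝ) *
              ((Fintype.card A : ℝ) * η / (lam * (1 - γ))) / (1 - γ) ^ 2)) :=
          Finset.sum_le_sum hCterm
      _ = (2 * (γ * (Fintype.card A : ℝ) *
            ((Fintype.card A : ℝ) * η / (lam * (1 - γ))) / (1 - γ) ^ 2)) *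
            ∑ j ∈ Finset.Icc 1 k, (1 - α * (1 - γ) * σt) ^ (k - j + 1) := by
          rw [Finset.mul_sum]
          exact Finset.sum_congr rfl fun j _ => by ring
      _ ≤ (2 * (γ * (Fintype.card A : ℝ) *
            ((Fintype.card A : ℝ) * η / (lam * (1 - γ))) / (1 - γ) ^ 2)) *
            (1 / (1 - (1 - α * (1 - γ) * σt))) :=
          mul_le_mul_of_nonneg_left (geom_icc_sum_le _ hq0 hq1 k) (by positivity)
      _ = 2 * γ * (Fintype.card A : ℝ) ^ 2 * η / (α * lam * σt * (1 - γ) ^ 4) := by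
          rw [h1mq]
          field_simp
  · -- D-term
    have hQcpt : ∀ j, 1 ≤ j → j ≤ k → ∀ p,
        |Qpi (j - 1) p - Qc (j - 1) p| ≤ 1 / (1 - γ) := by
      intro j hj1 hjk p
      have h := norm_le_pi_norm (fun p : S × A => Qpi (j - 1) p - Qc (j - 1) p) p
      rw [Real.norm_eq_abs] at h
      exact h.trans (hQc j hj1 hjk)
    have hDterm : ∀ j ∈ Finset.Icc 1 k,
        |∑ p : S × A,
            (Matrix.transpose ((Amat j) ^ (k - j + 1))).mulVec
              ((Jmat s).mulVec
                (fun q : S × A => pol (j - 1) q.1 q.2 - pol j q.1 q.2)) p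
            * (Qpi (j - 1) p - Qc (j - 1) p)|
          ≤ ((Fintype.card A : ℝ) * ((Fintype.card A : ℝ) * η / (lam * (1 - γ)))) *
              ((1 - α * (1 - γ) * σt) ^ (k - j + 1) * (1 / (1 - γ))) := by
      intro j hj
      obtain ⟨hj1, hjk⟩ := Finset.mem_Icc.mp hj
      refine term_bound (Amat j) _ hq0 (hrow j hj1 hjk) (k - j + 1) s _ _ _ _
        ?_ (by positivity) (hQcpt j hj1 hjk)
      calc ∑ a, |pol (j - 1) s a - pol j s a|
          ≤ ∑ a : A, (Fintype.card A : ℝ) * η / (lam * (1 - γ)) := by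
            refine Finset.sum_le_sum fun a _ => ?_
            rw [abs_sub_comm]
            exact hshiftpt j hj1 hjk s a
        _ = (Fintype.card A : ℝ) * ((Fintype.card A : ℝ) * η / (lam * (1 - γ))) := by
            rw [Finset.sum_const, Finset.card_univ, nsmul_eq_mul]
    calc (∑ j ∈ Finset.Icc 1 k, |_|)
        ≤ ∑ j ∈ Finset.Icc 1 k,
            ((Fintype.card A : ℝ) * ((Fintype.card A : ℝ) * η / (lam * (1 - γ)))) *
              ((1 - α * (1 - γ) * σt) ^ (k - j + 1) * (1 / (1 - γ))) :=
          Finset.sum_le_sum hDterm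
      _ = ((Fintype.card A : ℝ) * ((Fintype.card A : ℝ) * η / (lam * (1 - γ))) *
            (1 / (1 - γ))) * ∑ j ∈ Finset.Icc 1 k, (1 - α * (1 - γ) * σt) ^ (k - j + 1) := by
          rw [Finset.mul_sum]
          exact Finset.sum_congr rfl fun j _ => by ring
      _ ≤ ((Fintype.card A : ℝ) * ((Fintype.card A : ℝ) * η / (lam * (1 - γ))) *
            (1 / (1 - γ))) * (1 / (1 - (1 - α * (1 - γ) * σt))) :=
          mul_le_mul_of_nonneg_left (geom_icc_sum_le _ hq0 hq1 k) (by positivity)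
      _ = (Fintype.card A : ℝ) ^ 2 * η / (α * lam * σt * (1 - γ) ^ 3) := by
          rw [h1mq]
          field_simp
end

section
/- (Bound on the E-term of the bias decomposition.) Let (S,A,P,r,γ) be a finite discounted MDP, σ : S × A → ℝ with σ̃ ≤ σ(s,a) ≤ 1 for all (s,a) where σ̃ > 0, 0 < α ≤ 1, and Σ the diagonal (S×A)×(S×A) matrix of σ. Let η > 0, λ > 0, k ≥ 1 an integer, and let π*, π_0, …, π_k be policies with ‖π_j − π_{j−1}‖∞ ≤ |A|·η/(λ(1−γ)) for 1 ≤ j ≤ k. Set A_j = I − α·Σ·(I − γ·P^{π_j}) for 0 ≤ j ≤ k, and let R_0,…,R_{k−1} : S × A → ℝ with ‖R_{j−1}‖∞ ≤ 1/(1−γ). Then for every s ∈ S: ∑_{j=1}^k |⟨(((A_j)^{k−j+1}) − ((A_{j−1})^{k−j+1}))ᵀ·J_s·(π* − π_{j−1}), R_{j−1}⟩| ≤ 2γ·|A|²·η/(α·λ·σ̃²·(1−γ)⁴). -/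
/-!
Write `β = 1 - α σ̃ (1 - γ)`. Each `A_j = iterationMatrix α γ σ P π_j` has nonnegative entries
and row sums `1 - α σ(s,a) (1 - γ) ≤ β`, so `‖A_j‖∞ ≤ β`, while `A_j - A_{j-1} = α γ Σ P^{π_j - π_{j-1}}` has
`‖·‖∞ ≤ α γ |A| ‖π_j - π_{j-1}‖∞`. Telescoping gives `‖Aᵐ⁺¹ - Bᵐ⁺¹‖∞ ≤ (m + 1) βᵐ ‖A - B‖∞`, and
moving the transpose to the other side of the inner product bounds the `j`-th summand by
`‖J_s (π* - π_{j-1})‖₁ ≤ 2` times this times `‖R_{j-1}‖∞`. Summing over `j` leaves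
`∑ (n + 1) βⁿ ≤ (1 - β)⁻² = (α σ̃ (1 - γ))⁻²`.
-/

open Finset Matrix

attribute [local instance] Matrix.linftyOpNormedAddCommGroup Matrix.linftyOpNormedRing
  Matrix.linftyOpNormSMulClass

theorem norm_pow_succ_sub_pow_succ_le {R : Type*} [SeminormedRing R] {a b : R} {β : ℝ}
    (ha : ‖a‖ ≤ β) (hb : ‖b‖ ≤ β) (m : ℕ) :
    ‖a ^ (m + 1) - b ^ (m + 1)‖ ≤ (m + 1) * β ^ m * ‖a - b‖ := by
  have hβ : 0 ≤ β := (norm_nonneg a).trans ha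
  induction m with
  | zero => simp
  | succ m ih =>
    have htelescope : a ^ (m + 2) - b ^ (m + 2)
        = a * (a ^ (m + 1) - b ^ (m + 1)) + (a - b) * b ^ (m + 1) := by
      rw [pow_succ' a (m + 1), pow_succ' b (m + 1), mul_sub, sub_mul]
      abel
    have hbpow : ‖b ^ (m + 1)‖ ≤ β ^ (m + 1) :=
      (norm_pow_le' b m.succ_pos).trans (pow_le_pow_left₀ (norm_nonneg b) hb _)
    calc ‖a ^ (m + 2) - b ^ (m + 2)‖
        ≤ ‖a‖ * ‖a ^ (m + 1) - b ^ (m + 1)‖ + ‖a - b‖ * ‖b ^ (m + 1)‖ := by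
          rw [htelescope]
          exact (norm_add_le _ _).trans (add_le_add (norm_mul_le _ _) (norm_mul_le _ _))
      _ ≤ β * ((m + 1) * β ^ m * ‖a - b‖) + ‖a - b‖ * β ^ (m + 1) := by gcongr
      _ = (↑(m + 1) + 1) * β ^ (m + 1) * ‖a - b‖ := by push_cast; ring

theorem sum_Icc_one_tsub_eq_sum_range {M : Type*} [AddCommMonoid M] (f : ℕ → M) (k : ℕ) :
    ∑ j ∈ Icc 1 k, f (k - j) = ∑ n ∈ range k, f n := by
  rw [← Finset.Ico_add_one_right_eq_Icc, sum_Ico_reflect _ _ le_rfl, Nat.add_sub_cancel,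
    Nat.sub_self, Nat.Ico_zero_eq_range]

theorem sum_Icc_tsub_succ_mul_pow_le {β : ℝ} (h0 : 0 ≤ β) (h1 : β < 1) (k : ℕ) :
    ∑ j ∈ Icc 1 k, (((k - j : ℕ) : ℝ) + 1) * β ^ (k - j) ≤ 1 / (1 - β) ^ 2 := by
  refine (sum_Icc_one_tsub_eq_sum_range (fun n => ((n : ℝ) + 1) * β ^ n) k).trans_le ?_
  have hsum := hasSum_choose_mul_geometric_of_norm_lt_one 1
    (by rwa [Real.norm_eq_abs, abs_of_nonneg h0] : ‖β‖ < 1)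
  simp only [Nat.choose_one_right, Nat.cast_add, Nat.cast_one] at hsum
  exact sum_le_hasSum _ (fun n _ => by positivity) hsum

theorem Matrix.linfty_opNorm_le_of_sum_abs_le {m n : Type*} [Fintype m] [Fintype n]
    {M : Matrix m n ℝ} {c : ℝ} (hc : 0 ≤ c) (h : ∀ i, ∑ j, |M i j| ≤ c) : ‖M‖ ≤ c := by
  rw [linfty_opNorm_def, ← Real.coe_toNNReal c hc, NNReal.coe_le_coe, Finset.sup_le_iff]
  intro i _
  rw [← NNReal.coe_le_coe, Real.coe_toNNReal c hc]
  push_cast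
  simpa [Real.norm_eq_abs] using h i

theorem abs_dotProduct_transpose_mulVec_le {m n : Type*} [Fintype m] [Fintype n]
    (M : Matrix m n ℝ) (v : m → ℝ) (w : n → ℝ) :
    |Mᵀ *ᵥ v ⬝ᵥ w| ≤ (∑ i, |v i|) * ‖M‖ * ‖w‖ := by
  rw [mulVec_transpose, ← dotProduct_mulVec, mul_assoc, sum_mul]
  refine (abs_sum_le_sum_abs _ _).trans (sum_le_sum fun i _ => ?_)
  rw [abs_mul]
  gcongr
  exact (norm_le_pi_norm (M *ᵥ w) i).trans (linfty_opNorm_mulVec M w)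

theorem abs_transpose_pow_sub_pow_mulVec_dotProduct_le {n : Type*} [Fintype n] [DecidableEq n]
    {A B : Matrix n n ℝ} {β d c ρ : ℝ} (hA : ‖A‖ ≤ β) (hB : ‖B‖ ≤ β) (hAB : ‖A - B‖ ≤ d)
    {v w : n → ℝ} (hv : ∑ i, |v i| ≤ c) (hw : ‖w‖ ≤ ρ) (m : ℕ) :
    |(A ^ (m + 1) - B ^ (m + 1))ᵀ *ᵥ v ⬝ᵥ w| ≤ c * ((m + 1) * β ^ m * d) * ρ := by
  have hβ : 0 ≤ β := (norm_nonneg A).trans hA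
  have hd : 0 ≤ d := (norm_nonneg _).trans hAB
  have hc : 0 ≤ c := (sum_nonneg fun i _ => abs_nonneg (v i)).trans hv
  have hpow : ‖A ^ (m + 1) - B ^ (m + 1)‖ ≤ (m + 1) * β ^ m * d :=
    (norm_pow_succ_sub_pow_succ_le hA hB m).trans (by gcongr)
  exact (abs_dotProduct_transpose_mulVec_le _ v w).trans <|
    mul_le_mul (mul_le_mul hv hpow (norm_nonneg _) hc) hw (norm_nonneg _)
      (mul_nonneg hc (by positivity))

theorem sum_abs_sub_le_two {ι : Type*} [Fintype ι] {x y : ι → ℝ} (hx0 : ∀ i, 0 ≤ x i)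
    (hx1 : ∑ i, x i = 1) (hy0 : ∀ i, 0 ≤ y i) (hy1 : ∑ i, y i = 1) :
    ∑ i, |x i - y i| ≤ 2 :=
  calc ∑ i, |x i - y i| ≤ ∑ i, (x i + y i) :=
        sum_le_sum fun i _ => abs_sub_le_iff.mpr ⟨by linarith [hy0 i], by linarith [hx0 i]⟩
    _ = 2 := by rw [sum_add_distrib, hx1, hy1]; norm_num

section MDP

variable {S A : Type*} [Fintype S] [Fintype A] {P : S → A → S → ℝ}

theorem saMatrix_sub_saMatrix (P : S → A → S → ℝ) (π π' : S → A → ℝ) :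
    saMatrix P π - saMatrix P π' = saMatrix P (π - π') := by
  ext p q
  simp [saMatrix, mul_sub]

theorem sum_abs_saMatrix_eq_one (hP0 : ∀ s a s', 0 ≤ P s a s') (hP1 : ∀ s a, ∑ s', P s a s' = 1)
    {π : S → A → ℝ} (hπ0 : ∀ s a, 0 ≤ π s a) (hπ1 : ∀ s, ∑ a, π s a = 1) (p : S × A) :
    ∑ q, |saMatrix P π p q| = 1 := by
  simp only [saMatrix, of_apply, Fintype.sum_prod_type]
  simp_rw [abs_of_nonneg (mul_nonneg (hP0 _ _ _) (hπ0 _ _)), ← mul_sum, hπ1, mul_one, hP1]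

theorem norm_saMatrix_le (hP0 : ∀ s a s', 0 ≤ P s a s') (hP1 : ∀ s a, ∑ s', P s a s' = 1)
    (δ : S → A → ℝ) :
    ‖saMatrix P δ‖ ≤ Fintype.card A * ‖fun q : S × A => δ q.1 q.2‖ := by
  refine linfty_opNorm_le_of_sum_abs_le (by positivity) fun p => ?_
  calc ∑ q, |saMatrix P δ p q| ≤ ∑ q : S × A, P p.1 p.2 q.1 * ‖fun q : S × A => δ q.1 q.2‖ := by
        refine sum_le_sum fun q _ => ?_
        rw [saMatrix, of_apply, abs_mul, abs_of_nonneg (hP0 _ _ _)]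
        gcongr
        · exact hP0 _ _ _
        · exact norm_le_pi_norm (fun q : S × A => δ q.1 q.2) q
    _ = Fintype.card A * ‖fun q : S × A => δ q.1 q.2‖ := by
        simp [Fintype.sum_prod_type, ← sum_mul, ← mul_sum, hP1]

variable [DecidableEq S] [DecidableEq A]

noncomputable def iterationMatrix (α γ : ℝ) (σ : S × A → ℝ) (P : S → A → S → ℝ)
    (π : S → A → ℝ) : Matrix (S × A) (S × A) ℝ :=
  1 - α • (diagonal σ * (1 - γ • saMatrix P π))

theorem iterationMatrix_eq (α γ : ℝ) (σ : S × A → ℝ) (P : S → A → S → ℝ) (π : S → A → ℝ) :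
    iterationMatrix α γ σ P π
      = diagonal (fun p => 1 - α * σ p) + (α * γ) • (diagonal σ * saMatrix P π) := by
  ext p q
  by_cases h : p = q <;> simp [iterationMatrix, h, mul_sub, one_apply] <;> ring

theorem iterationMatrix_sub_iterationMatrix (α γ : ℝ) (σ : S × A → ℝ) (P : S → A → S → ℝ)
    (π π' : S → A → ℝ) :
    iterationMatrix α γ σ P π - iterationMatrix α γ σ P π'
      = (α * γ) • (diagonal σ * saMatrix P (π - π')) := by
  rw [iterationMatrix_eq, iterationMatrix_eq, ← saMatrix_sub_saMatrix, mul_sub, smul_sub]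
  abel

theorem norm_iterationMatrix_sub_le (hP0 : ∀ s a s', 0 ≤ P s a s')
    (hP1 : ∀ s a, ∑ s', P s a s' = 1) {α γ : ℝ} (hα : 0 ≤ α) (hγ : 0 ≤ γ) {σ : S × A → ℝ}
    (hσ : ‖σ‖ ≤ 1) (π π' : S → A → ℝ) :
    ‖iterationMatrix α γ σ P π - iterationMatrix α γ σ P π'‖
      ≤ α * γ * Fintype.card A * ‖fun q : S × A => π q.1 q.2 - π' q.1 q.2‖ :=
  calc _ = α * γ * ‖diagonal σ * saMatrix P (π - π')‖ := by
        rw [iterationMatrix_sub_iterationMatrix, norm_smul, Real.norm_of_nonneg (by positivity)]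
    _ ≤ α * γ * (‖σ‖ * (Fintype.card A * ‖fun q : S × A => π q.1 q.2 - π' q.1 q.2‖)) := by
        rw [← linfty_opNorm_diagonal]
        gcongr
        exact (linfty_opNorm_mul _ _).trans (by gcongr; exact norm_saMatrix_le hP0 hP1 _)
    _ ≤ α * γ * (1 * (Fintype.card A * ‖fun q : S × A => π q.1 q.2 - π' q.1 q.2‖)) := by
        gcongr
    _ = _ := by ring

theorem norm_iterationMatrix_le (hP0 : ∀ s a s', 0 ≤ P s a s')
    (hP1 : ∀ s a, ∑ s', P s a s' = 1) {π : S → A → ℝ} (hπ0 : ∀ s a, 0 ≤ π s a)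
    (hπ1 : ∀ s, ∑ a, π s a = 1) {α γ σt : ℝ} (hα0 : 0 ≤ α) (hα1 : α ≤ 1) (hγ0 : 0 ≤ γ)
    (hγ1 : γ ≤ 1) (hσt0 : 0 ≤ σt) (hσt1 : σt ≤ 1) {σ : S × A → ℝ}
    (hσ : ∀ p, σt ≤ σ p ∧ σ p ≤ 1) :
    ‖iterationMatrix α γ σ P π‖ ≤ 1 - α * σt * (1 - γ) := by
  have hβ : 0 ≤ 1 - α * σt * (1 - γ) := by
    nlinarith [mul_le_mul hα1 hσt1 hσt0 zero_le_one, mul_nonneg (mul_nonneg hα0 hσt0) hγ0]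
  refine linfty_opNorm_le_of_sum_abs_le hβ fun p => ?_
  obtain ⟨hσtp, hσp1⟩ := hσ p
  have hσp0 : 0 ≤ σ p := hσt0.trans hσtp
  have hασp : α * σ p ≤ 1 := by nlinarith
  simp only [iterationMatrix_eq, Matrix.add_apply, Matrix.smul_apply, diagonal_mul, smul_eq_mul]
  calc ∑ q, |diagonal (fun p => 1 - α * σ p) p q + α * γ * (σ p * saMatrix P π p q)|
      ≤ ∑ q, (|diagonal (fun p => 1 - α * σ p) p q| + α * γ * σ p * |saMatrix P π p q|) := by
        refine sum_le_sum fun q _ => (abs_add_le _ _).trans_eq ?_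
        rw [abs_mul, abs_mul, abs_mul, abs_of_nonneg hα0, abs_of_nonneg hγ0, abs_of_nonneg hσp0]
        ring
    _ = (1 - α * σ p) + α * γ * σ p := by
        rw [sum_add_distrib, ← mul_sum, sum_abs_saMatrix_eq_one hP0 hP1 hπ0 hπ1, mul_one]
        simp [diagonal_apply, apply_ite, abs_of_nonneg (sub_nonneg.mpr hασp)]
    _ ≤ 1 - α * σt * (1 - γ) := by nlinarith [mul_le_mul_of_nonneg_left hσtp hα0]

theorem sum_abs_Jmat_mulVec (s : S) (v : S × A → ℝ) :
    ∑ p, |(Jmat s *ᵥ v) p| = ∑ a, |v (s, a)| := by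
  rw [Fintype.sum_prod_type,
    Fintype.sum_eq_single s fun s' hs' => by simp [Jmat, mulVec_diagonal, hs']]
  simp [Jmat, mulVec_diagonal]

end MDP

theorem E_term_bound_general
    {S A : Type*} [Fintype S] [Fintype A] [Nonempty S] [Nonempty A]
    [DecidableEq S] [DecidableEq A]
    (P : S → A → S → ℝ) (hP0 : ∀ s a s', 0 ≤ P s a s')
    (hP1 : ∀ s a, ∑ s', P s a s' = 1)
    (γ : ℝ) (hγ0 : 0 ≤ γ) (hγ1 : γ < 1)
    (σ : S × A → ℝ) (σt : ℝ) (hσt : 0 < σt) (hσ : ∀ p, σt ≤ σ p ∧ σ p ≤ 1)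
    (α : ℝ) (hα0 : 0 < α) (hα1 : α ≤ 1)
    (η lam : ℝ) (hη : 0 < η) (hlam : 0 < lam)
    (k : ℕ)
    (polstar : S → A → ℝ)
    (hstar0 : ∀ s a, 0 ≤ polstar s a) (hstar1 : ∀ s, ∑ a, polstar s a = 1)
    (pol : ℕ → S → A → ℝ)
    (hpol0 : ∀ j ≤ k, ∀ s a, 0 ≤ pol j s a)
    (hpol1 : ∀ j ≤ k, ∀ s, ∑ a, pol j s a = 1)
    (hshift : ∀ j, 1 ≤ j → j ≤ k →
      ‖(fun p : S × A => pol j p.1 p.2 - pol (j - 1) p.1 p.2)‖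
        ≤ (Fintype.card A : ℝ) * η / (lam * (1 - γ)))
    (R : ℕ → S × A → ℝ)
    (hR : ∀ j, 1 ≤ j → j ≤ k → ‖R (j - 1)‖ ≤ 1 / (1 - γ)) :
    ∀ s : S,
      (∑ j ∈ Finset.Icc 1 k,
          |∑ p : S × A,
              (Matrix.transpose
                ((((1 : Matrix (S × A) (S × A) ℝ)
                    - α • (Matrix.diagonal σ
                        * (1 - γ • saMatrix P (pol j)))) ^ (k - j + 1))
                  - (((1 : Matrix (S × A) (S × A) ℝ)
                      - α • (Matrix.diagonal σ
                          * (1 - γ • saMatrix P (pol (j - 1))))) ^ (k - j + 1)))).mulVec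
                ((Jmat s).mulVec
                  (fun q : S × A => polstar q.1 q.2 - pol (j - 1) q.1 q.2)) p
              * R (j - 1) p|)
        ≤ 2 * γ * (Fintype.card A : ℝ) ^ 2 * η
            / (α * lam * σt ^ 2 * (1 - γ) ^ 4) := by
  intro s
  have hσt1 : σt ≤ 1 := (hσ (Classical.arbitrary _)).1.trans (hσ _).2
  have hσ_norm : ‖σ‖ ≤ 1 := (pi_norm_le_iff_of_nonneg zero_le_one).2 fun p => by
    rw [Real.norm_of_nonneg (hσt.le.trans (hσ p).1)]
    exact (hσ p).2
  have hA : ∀ j ≤ k, ‖iterationMatrix α γ σ P (pol j)‖ ≤ 1 - α * σt * (1 - γ) := fun j hj =>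
    norm_iterationMatrix_le hP0 hP1 (hpol0 j hj) (hpol1 j hj) hα0.le hα1 hγ0 hγ1.le hσt.le hσt1
      hσ
  set β := 1 - α * σt * (1 - γ) with hβ
  set C := α * γ * Fintype.card A * (Fintype.card A * η / (lam * (1 - γ))) with hC
  have hβ0 : 0 ≤ β := (norm_nonneg _).trans (hA 0 k.zero_le)
  have hβ1 : β < 1 := by have := mul_pos (mul_pos hα0 hσt) (sub_pos.2 hγ1); linarith
  have hC0 : 0 ≤ C := by have := sub_pos.2 hγ1; positivity
  calc _ ≤ ∑ j ∈ Icc 1 k, 2 * C / (1 - γ) * ((((k - j : ℕ) : ℝ) + 1) * β ^ (k - j)) := by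
        gcongr with j hj
        obtain ⟨hj1, hjk⟩ := mem_Icc.mp hj
        have hv := (sum_abs_Jmat_mulVec s fun q => polstar q.1 q.2 - pol (j - 1) q.1 q.2).trans_le
          (sum_abs_sub_le_two (hstar0 s) (hstar1 s) (hpol0 (j - 1) (by omega) s)
            (hpol1 (j - 1) (by omega) s))
        have hdiff := (norm_iterationMatrix_sub_le hP0 hP1 hα0.le hγ0 hσ_norm _ _).trans
          (mul_le_mul_of_nonneg_left (hshift j hj1 hjk) (by positivity))
        exact (abs_transpose_pow_sub_pow_mulVec_dotProduct_le (hA j hjk) (hA (j - 1) (by omega))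
          hdiff hv (hR j hj1 hjk) (k - j)).trans_eq (by ring)
    _ ≤ 2 * C / (1 - γ) * (1 / (1 - β) ^ 2) := by
        rw [← mul_sum]
        have := sub_pos.2 hγ1
        gcongr
        exact sum_Icc_tsub_succ_mul_pow_le hβ0 hβ1 k
    _ = _ := by
        rw [hC, hβ, sub_sub_cancel]
        have := (sub_pos.2 hγ1).ne'
        field_simp

/-- Bound on the `E`-term of the bias decomposition. -/
theorem E_term_bound
    {S A : Type*} [Fintype S] [Fintype A] [Nonempty S] [Nonempty A]
    [DecidableEq S] [DecidableEq A]
    (P : S → A → S → ℝ) (hP0 : ∀ s a s', 0 ≤ P s a s')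
    (hP1 : ∀ s a, ∑ s', P s a s' = 1)
    (r : S → A → ℝ) (hr0 : ∀ s a, 0 ≤ r s a) (hr1 : ∀ s a, r s a ≤ 1)
    (γ : ℝ) (hγ0 : 0 ≤ γ) (hγ1 : γ < 1)
    (σ : S × A → ℝ) (σt : ℝ) (hσt : 0 < σt) (hσ : ∀ p, σt ≤ σ p ∧ σ p ≤ 1)
    (α : ℝ) (hα0 : 0 < α) (hα1 : α ≤ 1)
    (η lam : ℝ) (hη : 0 < η) (hlam : 0 < lam)
    (k : ℕ) (hk : 1 ≤ k)
    (polstar : S → A → ℝ)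
    (hstar0 : ∀ s a, 0 ≤ polstar s a) (hstar1 : ∀ s, ∑ a, polstar s a = 1)
    (pol : ℕ → S → A → ℝ)
    (hpol0 : ∀ j ≤ k, ∀ s a, 0 ≤ pol j s a)
    (hpol1 : ∀ j ≤ k, ∀ s, ∑ a, pol j s a = 1)
    (hshift : ∀ j, 1 ≤ j → j ≤ k →
      ‖(fun p : S × A => pol j p.1 p.2 - pol (j - 1) p.1 p.2)‖
        ≤ (Fintype.card A : ℝ) * η / (lam * (1 - γ)))
    (R : ℕ → S × A → ℝ)
    (hR : ∀ j, 1 ≤ j → j ≤ k → ‖R (j - 1)‖ ≤ 1 / (1 - γ)) :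
    ∀ s : S,
      (∑ j ∈ Finset.Icc 1 k,
          |∑ p : S × A,
              (Matrix.transpose
                ((((1 : Matrix (S × A) (S × A) ℝ)
                    - α • (Matrix.diagonal σ
                        * (1 - γ • saMatrix P (pol j)))) ^ (k - j + 1))
                  - (((1 : Matrix (S × A) (S × A) ℝ)
                      - α • (Matrix.diagonal σ
                          * (1 - γ • saMatrix P (pol (j - 1))))) ^ (k - j + 1)))).mulVec
                ((Jmat s).mulVec
                  (fun q : S × A => polstar q.1 q.2 - pol (j - 1) q.1 q.2)) p
              * R (j - 1) p|)
        ≤ 2 * γ * (Fintype.card A : ℝ) ^ 2 * η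
            / (α * lam * σt ^ 2 * (1 - γ) ^ 4) :=
  E_term_bound_general P hP0 hP1 γ hγ0 hγ1 σ σt hσt hσ α hα0 hα1 η lam hη hlam k polstar hstar0
    hstar1 pol hpol0 hpol1 hshift R hR
end

section
/- (Greedification error of a mirror-descent step.) Let (S,A,P,r,γ) be a finite discounted MDP, η > 0, Q : S × A → ℝ, π and π⁺ policies, and D : (A → ℝ) → (A → ℝ) → ℝ with D x y ≥ 0 for all x, y ∈ Δ(A). Let π̃ be a policy with ∑_a π̃ s a · Q(s,a) = max_a Q(s,a) for every s, and set c = (1/η)·max_s D (π̃(·|s)) (π(·|s)). Assume that for every s ∈ S and every p ∈ Δ(A): η·⟨π⁺(·|s) − p, Q(s,·)⟩ ≥ D (π⁺(·|s)) (π(·|s)) + D p (π⁺(·|s)) − D p (π(·|s)). Then: (i) ∑_a π⁺ s a · Q(s,a) ≥ max_a Q(s,a) − c for every s; and (ii) (F^{π⁺} Q)(s,a) ≥ (F Q)(s,a) − γ·c for every (s,a), where F is the optimal Bellman operator. -/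
/-- greedification error of a mirror-descent step. -/
theorem mirror_descent_greedification_error
    {S A : Type*} [Fintype S] [Fintype A] [Nonempty S] [Nonempty A]
    (P : S → A → S → ℝ) (hP0 : ∀ s a s', 0 ≤ P s a s')
    (hP1 : ∀ s a, ∑ s', P s a s' = 1)
    (r : S → A → ℝ) (hr0 : ∀ s a, 0 ≤ r s a) (hr1 : ∀ s a, r s a ≤ 1)
    (γ : ℝ) (hγ0 : 0 ≤ γ) (hγ1 : γ < 1)
    (η : ℝ) (hη : 0 < η)
    (Q : S × A → ℝ)
    (pol polp : S → A → ℝ)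
    (hpol0 : ∀ s a, 0 ≤ pol s a) (hpol1 : ∀ s, ∑ a, pol s a = 1)
    (hpolp0 : ∀ s a, 0 ≤ polp s a) (hpolp1 : ∀ s, ∑ a, polp s a = 1)
    (D : (A → ℝ) → (A → ℝ) → ℝ)
    (hD0 : ∀ x y : A → ℝ, (∀ a, 0 ≤ x a) → ∑ a, x a = 1 →
      (∀ a, 0 ≤ y a) → ∑ a, y a = 1 → 0 ≤ D x y)
    (polt : S → A → ℝ)
    (hpolt0 : ∀ s a, 0 ≤ polt s a) (hpolt1 : ∀ s, ∑ a, polt s a = 1)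
    (hpolt : ∀ s, ∑ a, polt s a * Q (s, a) = ⨆ a, Q (s, a))
    (hthree : ∀ s, ∀ p : A → ℝ, (∀ a, 0 ≤ p a) → ∑ a, p a = 1 →
      η * ∑ a, (polp s a - p a) * Q (s, a) ≥
        D (fun a => polp s a) (fun a => pol s a)
          + D p (fun a => polp s a) - D p (fun a => pol s a)) :
    (∀ s, ∑ a, polp s a * Q (s, a)
        ≥ (⨆ a, Q (s, a))
          - (1 / η) * ⨆ s', D (fun a => polt s' a) (fun a => pol s' a)) ∧
    (∀ s a,
      r s a + γ * ∑ s', P s a s' * ∑ a', polp s' a' * Q (s', a')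
        ≥ (r s a + γ * ∑ s', P s a s' * (⨆ a', Q (s', a')))
          - γ * ((1 / η) * ⨆ s', D (fun a => polt s' a) (fun a => pol s' a))) := by

  set c : ℝ := (1 / η) * ⨆ s', D (fun a => polt s' a) (fun a => pol s' a) with hc
  have h1 : ∀ s, ∑ a, polp s a * Q (s, a) ≥ (⨆ a, Q (s, a)) - c := by
    intro s
    have h3 := hthree s (polt s) (hpolt0 s) (hpolt1 s)
    have hd1 : 0 ≤ D (fun a => polp s a) (fun a => pol s a) :=
      hD0 _ _ (hpolp0 s) (hpolp1 s) (hpol0 s) (hpol1 s)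
    have hd2 : 0 ≤ D (polt s) (fun a => polp s a) :=
      hD0 _ _ (hpolt0 s) (hpolt1 s) (hpolp0 s) (hpolp1 s)
    have hsum : ∑ a, (polp s a - polt s a) * Q (s, a)
        = (∑ a, polp s a * Q (s, a)) - ∑ a, polt s a * Q (s, a) := by
      rw [← Finset.sum_sub_distrib]; congr 1; ext a; ring
    have hle : D (polt s) (fun a => pol s a)
        ≤ ⨆ s', D (fun a => polt s' a) (fun a => pol s' a) := by
      exact le_ciSup (f := fun s' => D (fun a => polt s' a) (fun a => pol s' a))
        (Set.Finite.bddAbove (Set.finite_range _)) s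
    have hkey : η * ((∑ a, polp s a * Q (s, a)) - (⨆ a, Q (s, a)))
        ≥ -(⨆ s', D (fun a => polt s' a) (fun a => pol s' a)) := by
      rw [hsum, hpolt s] at h3
      linarith
    rw [hc]
    have hη' : 0 ≤ 1 / η := by positivity
    have h5 := mul_le_mul_of_nonneg_left hkey hη'
    rw [← mul_assoc, one_div_mul_cancel (ne_of_gt hη), one_mul] at h5
    nlinarith [h5, mul_le_mul_of_nonneg_left hle hη']
  refine ⟨h1, fun s a => ?_⟩
  have h2 : ∑ s', P s a s' * ∑ a', polp s' a' * Q (s', a')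
      ≥ ∑ s', P s a s' * ((⨆ a', Q (s', a')) - c) := by
    apply Finset.sum_le_sum
    intro s' _
    exact mul_le_mul_of_nonneg_left (h1 s') (hP0 s a s')
  have h4 : ∑ s', P s a s' * ((⨆ a', Q (s', a')) - c)
      = (∑ s', P s a s' * (⨆ a', Q (s', a'))) - c := by
    simp only [mul_sub]
    rw [Finset.sum_sub_distrib, ← Finset.sum_mul, hP1 s a, one_mul]
  rw [h4] at h2
  nlinarith [h2]
end

section
/- (One-step contraction of the critic error toward Q*.) Let (S,A,P,r,γ) be a finite discounted MDP, σ : S × A → ℝ with σ̃ ≤ σ(s,a) ≤ 1 for all (s,a) where σ̃ > 0, 0 < α ≤ 1, c ≥ 0, and ω : S × A → ℝ. Let Q* satisfy F Q* = Q* (F the optimal Bellman operator), let Q : S × A → ℝ, and let π⁺ be a policy with ∑_a π⁺ s a · Q(s,a) ≥ max_a Q(s,a) − c for every s ∈ S. Define Q'(s,a) = Q(s,a) + α·σ(s,a)·((F^{π⁺} Q)(s,a) − Q(s,a)) + α·ω(s,a). Then ‖Q* − Q'‖∞ ≤ (1 − (1−γ)·α·σ̃)·‖Q* − Q‖∞ +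 α·γ·c + α·‖ω‖∞. -/
/-- one-step contraction of the critic error toward `Q*`. -/
theorem critic_error_contraction
    {S A : Type*} [Fintype S] [Fintype A] [Nonempty S] [Nonempty A]
    (P : S → A → S → ℝ) (hP0 : ∀ s a s', 0 ≤ P s a s')
    (hP1 : ∀ s a, ∑ s', P s a s' = 1)
    (r : S → A → ℝ) (hr0 : ∀ s a, 0 ≤ r s a) (hr1 : ∀ s a, r s a ≤ 1)
    (γ : ℝ) (hγ0 : 0 ≤ γ) (hγ1 : γ < 1)
    (σ : S × A → ℝ) (σt : ℝ) (hσt : 0 < σt) (hσ : ∀ p, σt ≤ σ p ∧ σ p ≤ 1)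
    (α : ℝ) (hα0 : 0 < α) (hα1 : α ≤ 1)
    (c : ℝ) (hc : 0 ≤ c)
    (ω : S × A → ℝ)
    (Qstar : S × A → ℝ)
    (hQstar : ∀ s a,
      r s a + γ * ∑ s', P s a s' * (⨆ a', Qstar (s', a')) = Qstar (s, a))
    (Q : S × A → ℝ)
    (polp : S → A → ℝ)
    (hpolp0 : ∀ s a, 0 ≤ polp s a) (hpolp1 : ∀ s, ∑ a, polp s a = 1)
    (hgreedy : ∀ s, ∑ a, polp s a * Q (s, a) ≥ (⨆ a, Q (s, a)) - c)
    (Q' : S × A → ℝ)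
    (hQ' : ∀ s a, Q' (s, a) = Q (s, a)
      + α * σ (s, a) *
          ((r s a + γ * ∑ s', P s a s' * ∑ a', polp s' a' * Q (s', a')) - Q (s, a))
      + α * ω (s, a)) :
    ‖(fun p : S × A => Qstar p - Q' p)‖
      ≤ (1 - (1 - γ) * α * σt) * ‖(fun p : S × A => Qstar p - Q p)‖
        + α * γ * c + α * ‖ω‖ := by

  have hE0 : (0:ℝ) ≤ ‖(fun p : S × A => Qstar p - Q p)‖ := norm_nonneg _
  set E := ‖(fun p : S × A => Qstar p - Q p)‖ with hEdef
  have hW0 : (0:ℝ) ≤ ‖ω‖ := norm_nonneg _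
  have hpt : ∀ p : S × A, |Qstar p - Q p| ≤ E := fun p => by
    simpa using norm_le_pi_norm (fun p : S × A => Qstar p - Q p) p
  have hωpt : ∀ p : S × A, |ω p| ≤ ‖ω‖ := fun p => by
    simpa using norm_le_pi_norm ω p
  obtain ⟨s0⟩ := (inferInstance : Nonempty S)
  obtain ⟨a0⟩ := (inferInstance : Nonempty A)
  have hσt1 : σt ≤ 1 := le_trans (hσ (s0, a0)).1 (hσ (s0, a0)).2
  have hga : (1 - γ) * α ≤ 1 := by nlinarith
  have hcoef : 0 ≤ 1 - (1 - γ) * α * σt := by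
    nlinarith [mul_le_mul_of_nonneg_right hga hσt.le]
  have hbdd : ∀ (f : A → ℝ), BddAbove (Set.range f) := fun f =>
    Set.Finite.bddAbove (Set.finite_range f)
  have hsup : ∀ s : S, |(⨆ a, Qstar (s, a)) - ∑ a, polp s a * Q (s, a)| ≤ E + c := by
    intro s
    have h1 : ∑ a, polp s a * Q (s, a) ≤ ⨆ a, Q (s, a) := by
      calc ∑ a, polp s a * Q (s, a) ≤ ∑ a, polp s a * (⨆ a', Q (s, a')) := by
            apply Finset.sum_le_sum
            intro a _
            exact mul_le_mul_of_nonneg_left (le_ciSup (hbdd fun a' => Q (s, a')) a) (hpolp0 s a)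
        _ = ⨆ a', Q (s, a') := by rw [← Finset.sum_mul, hpolp1 s, one_mul]
    have h2 : (⨆ a, Qstar (s, a)) ≤ (⨆ a, Q (s, a)) + E := by
      apply ciSup_le
      intro a
      have hle := le_ciSup (hbdd (fun a => Q (s, a))) a
      have h := abs_le.mp (hpt (s, a))
      linarith [h.2]
    have h3 : (⨆ a, Q (s, a)) ≤ (⨆ a, Qstar (s, a)) + E := by
      apply ciSup_le
      intro a
      have hle := le_ciSup (hbdd (fun a => Qstar (s, a))) a
      have h := abs_le.mp (hpt (s, a))
      linarith [h.1]
    have h4 := hgreedy s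
    rw [abs_le]
    constructor <;> linarith
  have key : ∀ p : S × A,
      |Qstar p - Q' p| ≤ (1 - (1 - γ) * α * σt) * E + α * γ * c + α * ‖ω‖ := by
    rintro ⟨s, a⟩
    have hQs := hQstar s a
    have hσa := hσ (s, a)
    have hsplit : ∑ s', P s a s' * ((⨆ a', Qstar (s', a')) - ∑ a', polp s' a' * Q (s', a'))
        = (∑ s', P s a s' * (⨆ a', Qstar (s', a')))
          - ∑ s', P s a s' * ∑ a', polp s' a' * Q (s', a') := by
      rw [← Finset.sum_sub_distrib]
      exact Finset.sum_congr rfl fun s' _ => by ring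
    have hD : Qstar (s, a) - Q' (s, a)
        = (1 - α * σ (s, a)) * (Qstar (s, a) - Q (s, a))
          + α * σ (s, a) * γ *
            (∑ s', P s a s' * ((⨆ a', Qstar (s', a')) - ∑ a', polp s' a' * Q (s', a')))
          - α * ω (s, a) := by
      rw [hQ' s a, hsplit]
      linear_combination (-(α * σ (s, a))) * hQs
    have hsum : |∑ s', P s a s' * ((⨆ a', Qstar (s', a')) - ∑ a', polp s' a' * Q (s', a'))|
        ≤ E + c := by
      calc |∑ s', P s a s' * ((⨆ a', Qstar (s', a')) - ∑ a', polp s' a' * Q (s', a'))|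
          ≤ ∑ s', |P s a s' * ((⨆ a', Qstar (s', a')) - ∑ a', polp s' a' * Q (s', a'))| :=
            Finset.abs_sum_le_sum_abs _ _
        _ ≤ ∑ s', P s a s' * (E + c) := by
            apply Finset.sum_le_sum
            intro s' _
            rw [abs_mul, abs_of_nonneg (hP0 s a s')]
            exact mul_le_mul_of_nonneg_left (hsup s') (hP0 s a s')
        _ = E + c := by rw [← Finset.sum_mul, hP1, one_mul]
    have h1 : 0 ≤ 1 - α * σ (s, a) := by nlinarith [hσa.2]
    have hγσ : 0 ≤ α * σ (s, a) * γ := by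
      have : 0 ≤ σ (s, a) := le_trans hσt.le hσa.1
      positivity
    have b1 : (1 - α * σ (s, a)) * |Qstar (s, a) - Q (s, a)| ≤ (1 - α * σ (s, a)) * E :=
      mul_le_mul_of_nonneg_left (hpt (s, a)) h1
    have b2 : α * σ (s, a) * γ *
        |∑ s', P s a s' * ((⨆ a', Qstar (s', a')) - ∑ a', polp s' a' * Q (s', a'))|
        ≤ α * σ (s, a) * γ * (E + c) := mul_le_mul_of_nonneg_left hsum hγσ
    have b3 : α * |ω (s, a)| ≤ α * ‖ω‖ := mul_le_mul_of_nonneg_left (hωpt (s, a)) hα0.le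
    have habs : |Qstar (s, a) - Q' (s, a)|
        ≤ (1 - α * σ (s, a)) * |Qstar (s, a) - Q (s, a)|
          + α * σ (s, a) * γ *
            |∑ s', P s a s' * ((⨆ a', Qstar (s', a')) - ∑ a', polp s' a' * Q (s', a'))|
          + α * |ω (s, a)| := by
      rw [hD]
      calc |(1 - α * σ (s, a)) * (Qstar (s, a) - Q (s, a))
            + α * σ (s, a) * γ *
              (∑ s', P s a s' * ((⨆ a', Qstar (s', a')) - ∑ a', polp s' a' * Q (s', a')))
            - α * ω (s, a)|
          ≤ |(1 - α * σ (s, a)) * (Qstar (s, a) - Q (s, a))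
            + α * σ (s, a) * γ *
              (∑ s', P s a s' * ((⨆ a', Qstar (s', a')) - ∑ a', polp s' a' * Q (s', a')))|
            + |α * ω (s, a)| := abs_sub _ _
        _ ≤ _ := by
            rw [abs_mul α, abs_of_nonneg hα0.le]
            gcongr
            calc _ ≤ |(1 - α * σ (s, a)) * (Qstar (s, a) - Q (s, a))|
                + |α * σ (s, a) * γ *
                  (∑ s', P s a s' * ((⨆ a', Qstar (s', a')) - ∑ a', polp s' a' * Q (s', a')))| :=
                abs_add_le _ _
              _ ≤ _ := by
                rw [abs_mul (1 - α * σ (s, a)), abs_of_nonneg h1,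
                  abs_mul (α * σ (s, a) * γ), abs_of_nonneg hγσ]
    have key1 : (1 - γ) * α * (σt * E) ≤ (1 - γ) * α * (σ (s, a) * E) :=
      mul_le_mul_of_nonneg_left (mul_le_mul_of_nonneg_right hσa.1 hE0)
        (by nlinarith : (0:ℝ) ≤ (1 - γ) * α)
    have key2 : α * γ * (σ (s, a) * c) ≤ α * γ * (1 * c) :=
      mul_le_mul_of_nonneg_left (mul_le_mul_of_nonneg_right hσa.2 hc)
        (by positivity)
    nlinarith [b1, b2, b3, habs, key1, key2]
  have hRHS : 0 ≤ (1 - (1 - γ) * α * σt) * E + α * γ * c + α * ‖ω‖ := by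
    have := mul_nonneg hcoef hE0
    have h1 : 0 ≤ α * γ * c := by positivity
    have h2 : 0 ≤ α * ‖ω‖ := by positivity
    linarith
  refine (pi_norm_le_iff_of_nonneg hRHS).mpr fun p => ?_
  simpa using key p
end

section
/- (Actor error controlled by critic errors.) Let (S,A,P,r,γ) be a finite discounted MDP, σ : S × A → ℝ with σ̃ ≤ σ(s,a) ≤ 1 for all (s,a) where σ̃ > 0, 0 < α ≤ 1, and ω : S × A → ℝ. Let Q* satisfy F Q* = Q* (F the optimal Bellman operator), let π⁺ be a policy and Q^{π⁺} a fixed point of F^{π⁺}, let Q : S × A → ℝ, and define Q'(s,a) = Q(s,a) + α·σ(s,a)·((F^{π⁺} Q)(s,a) − Q(s,a)) + α·ω(s,a). Then ‖Q* − Q^{π⁺}‖∞ ≤ (1/(α·(1−γ)·σ̃))·( ‖Q* − Q'‖∞ + ‖Q* − Q‖∞ + α·‖ω‖∞ ). -/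
set_option maxHeartbeats 1600000 in
/-- actor error controlled by critic errors. -/
theorem actor_error_bound
    {S A : Type*} [Fintype S] [Fintype A] [Nonempty S] [Nonempty A]
    (P : S → A → S → ℝ) (hP0 : ∀ s a s', 0 ≤ P s a s')
    (hP1 : ∀ s a, ∑ s', P s a s' = 1)
    (r : S → A → ℝ) (hr0 : ∀ s a, 0 ≤ r s a) (hr1 : ∀ s a, r s a ≤ 1)
    (γ : ℝ) (hγ0 : 0 ≤ γ) (hγ1 : γ < 1)
    (σ : S × A → ℝ) (σt : ℝ) (hσt : 0 < σt) (hσ : ∀ p, σt ≤ σ p ∧ σ p ≤ 1)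
    (α : ℝ) (hα0 : 0 < α) (hα1 : α ≤ 1)
    (ω : S × A → ℝ)
    (Qstar : S × A → ℝ)
    (hQstar : ∀ s a,
      r s a + γ * ∑ s', P s a s' * (⨆ a', Qstar (s', a')) = Qstar (s, a))
    (polp : S → A → ℝ)
    (hpolp0 : ∀ s a, 0 ≤ polp s a) (hpolp1 : ∀ s, ∑ a, polp s a = 1)
    (Qpip : S × A → ℝ)
    (hQpip : ∀ s a,
      r s a + γ * ∑ s', P s a s' * ∑ a', polp s' a' * Qpip (s', a') = Qpip (s, a))
    (Q : S × A → ℝ)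
    (Q' : S × A → ℝ)
    (hQ' : ∀ s a, Q' (s, a) = Q (s, a)
      + α * σ (s, a) *
          ((r s a + γ * ∑ s', P s a s' * ∑ a', polp s' a' * Q (s', a')) - Q (s, a))
      + α * ω (s, a)) :
    ‖(fun p : S × A => Qstar p - Qpip p)‖
      ≤ (1 / (α * (1 - γ) * σt)) *
          (‖(fun p : S × A => Qstar p - Q' p)‖
            + ‖(fun p : S × A => Qstar p - Q p)‖ + α * ‖ω‖) := by
  classical
  -- Bellman operator of the policy polp
  set Top : (S × A → ℝ) → (S × A → ℝ) :=
    fun f p => r p.1 p.2 + γ * ∑ s', P p.1 p.2 s' * ∑ a', polp s' a' * f (s', a')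
    with hTop
  set X : ℝ := ‖(fun p : S × A => Qstar p - Q' p)‖ with hX
  set Y : ℝ := ‖(fun p : S × A => Qstar p - Q p)‖ with hY
  set Z : ℝ := ‖ω‖ with hZ
  set D : ℝ := ‖(fun p : S × A => Qstar p - Qpip p)‖ with hD
  set E : ℝ := ‖(fun p : S × A => Qstar p - Top Qstar p)‖ with hE
  have hX0 : 0 ≤ X := norm_nonneg _
  have hY0 : 0 ≤ Y := norm_nonneg _
  have hZ0 : 0 ≤ Z := norm_nonneg _
  have hD0 : 0 ≤ D := norm_nonneg _
  have hE0 : 0 ≤ E := norm_nonneg _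
  have h1γ : (0:ℝ) ≤ 1 - γ := by linarith
  -- σt ≤ 1
  have hσt1 : σt ≤ 1 := by
    obtain ⟨p⟩ := (inferInstance : Nonempty (S × A))
    exact le_trans (hσ p).1 (hσ p).2
  -- weighted-average bound
  have key : ∀ (f : S × A → ℝ) (s : S) (a : A),
      |∑ s', P s a s' * ∑ a', polp s' a' * f (s', a')| ≤ ‖f‖ := by
    intro f s a
    calc |∑ s', P s a s' * ∑ a', polp s' a' * f (s', a')|
        ≤ ∑ s', |P s a s' * ∑ a', polp s' a' * f (s', a')| :=
          Finset.abs_sum_le_sum_abs _ _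
      _ ≤ ∑ s', P s a s' * ‖f‖ := by
          apply Finset.sum_le_sum
          intro s' _
          rw [abs_mul, abs_of_nonneg (hP0 s a s')]
          refine mul_le_mul_of_nonneg_left ?_ (hP0 s a s')
          calc |∑ a', polp s' a' * f (s', a')|
              ≤ ∑ a', |polp s' a' * f (s', a')| := Finset.abs_sum_le_sum_abs _ _
            _ ≤ ∑ a', polp s' a' * ‖f‖ := by
                apply Finset.sum_le_sum
                intro a' _
                rw [abs_mul, abs_of_nonneg (hpolp0 s' a')]
                exact mul_le_mul_of_nonneg_left
                  (by simpa using norm_le_pi_norm f (s', a')) (hpolp0 s' a')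
            _ = ‖f‖ := by rw [← Finset.sum_mul, hpolp1 s', one_mul]
      _ = ‖f‖ := by rw [← Finset.sum_mul, hP1 s a, one_mul]
  -- contraction of Top
  have contr : ∀ (f g : S × A → ℝ) (s : S) (a : A),
      |Top f (s, a) - Top g (s, a)| ≤ γ * ‖(fun p : S × A => f p - g p)‖ := by
    intro f g s a
    have inner : ∀ s', ∑ a', polp s' a' * (f (s', a') - g (s', a'))
        = (∑ a', polp s' a' * f (s', a')) - ∑ a', polp s' a' * g (s', a') := by
      intro s'
      rw [← Finset.sum_sub_distrib]
      exact Finset.sum_congr rfl fun a' _ => mul_sub _ _ _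
    have hsum : ∑ s', P s a s' * ∑ a', polp s' a' * (f (s', a') - g (s', a'))
        = (∑ s', P s a s' * ∑ a', polp s' a' * f (s', a'))
          - ∑ s', P s a s' * ∑ a', polp s' a' * g (s', a') := by
      rw [← Finset.sum_sub_distrib]
      refine Finset.sum_congr rfl fun s' _ => ?_
      rw [inner s', mul_sub]
    have hdiff : Top f (s, a) - Top g (s, a)
        = γ * ∑ s', P s a s' * ∑ a', polp s' a' * (f (s', a') - g (s', a')) := by
      simp only [hTop]
      rw [hsum]
      ring
    rw [hdiff, abs_mul, abs_of_nonneg hγ0]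
    exact mul_le_mul_of_nonneg_left (key (fun p => f p - g p) s a) hγ0
  -- (1 - γ) * D ≤ E
  have stepA : (1 - γ) * D ≤ E := by
    have hDle : D ≤ E + γ * D := by
      rw [hD]
      apply pi_norm_le_iff_of_nonneg (by positivity) |>.2
      intro p
      obtain ⟨s, a⟩ := p
      have h1 : Qpip (s, a) = Top Qpip (s, a) := (hQpip s a).symm
      have h2 : |Qstar (s, a) - Top Qstar (s, a)| ≤ E := by
        simpa using norm_le_pi_norm (fun p : S × A => Qstar p - Top Qstar p) (s, a)
      have h3 := contr Qstar Qpip s a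
      rw [← hD] at h3
      calc ‖Qstar (s, a) - Qpip (s, a)‖
          = |(Qstar (s, a) - Top Qstar (s, a)) + (Top Qstar (s, a) - Top Qpip (s, a))| := by
            rw [Real.norm_eq_abs, h1]; ring_nf
        _ ≤ |Qstar (s, a) - Top Qstar (s, a)| + |Top Qstar (s, a) - Top Qpip (s, a)| :=
            abs_add_le _ _
        _ ≤ E + γ * D := add_le_add h2 h3
    linarith
  have hpos : 0 < α * σt := by positivity
  have hcoef : 0 ≤ 1 - α * σt * (1 - γ) := by
    have h1 : α * σt ≤ 1 := mul_le_one₀ hα1 hσt.le hσt1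
    nlinarith [mul_nonneg (mul_nonneg hα0.le hσt.le) hγ0]
  have hB0 : 0 ≤ X + α * Z + (1 - α * σt * (1 - γ)) * Y :=
    add_nonneg (add_nonneg hX0 (by positivity)) (mul_nonneg hcoef hY0)
  -- pointwise identity + bound:  α*σt*E ≤ X + α*Z + (1 - α*σt*(1-γ))*Y
  have stepB : α * σt * E ≤ X + α * Z + (1 - α * σt * (1 - γ)) * Y := by
    have hEdiv : E ≤ (X + α * Z + (1 - α * σt * (1 - γ)) * Y) / (α * σt) := by
      rw [hE]
      apply pi_norm_le_iff_of_nonneg (div_nonneg hB0 hpos.le) |>.2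
      intro p
      obtain ⟨s, a⟩ := p
      rw [Real.norm_eq_abs, le_div_iff₀' hpos]
      have hc1 : α * σt ≤ α * σ (s, a) :=
        mul_le_mul_of_nonneg_left (hσ (s, a)).1 hα0.le
      have hc2 : α * σ (s, a) ≤ 1 := by
        nlinarith [(hσ (s, a)).2]
      have hc0 : 0 < α * σ (s, a) := lt_of_lt_of_le hpos hc1
      have h := hQ' s a
      have hTQ : Top Q (s, a)
          = r s a + γ * ∑ s', P s a s' * ∑ a', polp s' a' * Q (s', a') := rfl
      -- key identity
      have hid : α * σ (s, a) * (Qstar (s, a) - Top Qstar (s, a))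
          = (α * σ (s, a) - 1) * (Qstar (s, a) - Q (s, a)) - (Q' (s, a) - Qstar (s, a))
            + α * ω (s, a) + α * σ (s, a) * (Top Q (s, a) - Top Qstar (s, a)) := by
        rw [hTQ]
        linear_combination h
      have h1 : |Qstar (s, a) - Q (s, a)| ≤ Y := by
        simpa using norm_le_pi_norm (fun p : S × A => Qstar p - Q p) (s, a)
      have h2 : |Q' (s, a) - Qstar (s, a)| ≤ X := by
        have := norm_le_pi_norm (fun p : S × A => Qstar p - Q' p) (s, a)
        rw [abs_sub_comm]
        simpa using this
      have h3 : |ω (s, a)| ≤ Z := by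
        simpa using norm_le_pi_norm ω (s, a)
      have h4 := contr Q Qstar s a
      have h4' : |Top Q (s, a) - Top Qstar (s, a)| ≤ γ * Y := by
        have heq : (fun p : S × A => Q p - Qstar p)
            = -(fun p : S × A => Qstar p - Q p) := by
          funext p; simp
        rw [heq, norm_neg, ← hY] at h4
        exact h4
      have habs : α * σ (s, a) * |Qstar (s, a) - Top Qstar (s, a)|
          ≤ (1 - α * σ (s, a)) * Y + X + α * Z + α * σ (s, a) * γ * Y := by
        have e0 : α * σ (s, a) * |Qstar (s, a) - Top Qstar (s, a)|
            = |α * σ (s, a) * (Qstar (s, a) - Top Qstar (s, a))| := by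
          rw [abs_mul, abs_of_pos hc0]
        rw [e0, hid]
        have t1 : |(α * σ (s, a) - 1) * (Qstar (s, a) - Q (s, a))|
            ≤ (1 - α * σ (s, a)) * Y := by
          rw [abs_mul, abs_of_nonpos (by linarith : α * σ (s, a) - 1 ≤ 0)]
          exact mul_le_mul (by linarith) h1 (abs_nonneg _) (by linarith)
        have t2 : |α * ω (s, a)| ≤ α * Z := by
          rw [abs_mul, abs_of_pos hα0]
          exact mul_le_mul_of_nonneg_left h3 hα0.le
        have t3 : |α * σ (s, a) * (Top Q (s, a) - Top Qstar (s, a))|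
            ≤ α * σ (s, a) * γ * Y := by
          rw [abs_mul, abs_of_pos hc0]
          nlinarith [mul_le_mul_of_nonneg_left h4' hc0.le]
        calc |(α * σ (s, a) - 1) * (Qstar (s, a) - Q (s, a)) - (Q' (s, a) - Qstar (s, a))
              + α * ω (s, a) + α * σ (s, a) * (Top Q (s, a) - Top Qstar (s, a))|
            ≤ |(α * σ (s, a) - 1) * (Qstar (s, a) - Q (s, a)) - (Q' (s, a) - Qstar (s, a))
              + α * ω (s, a)| + |α * σ (s, a) * (Top Q (s, a) - Top Qstar (s, a))| :=
              abs_add_le _ _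
          _ ≤ |(α * σ (s, a) - 1) * (Qstar (s, a) - Q (s, a)) - (Q' (s, a) - Qstar (s, a))|
              + |α * ω (s, a)| + |α * σ (s, a) * (Top Q (s, a) - Top Qstar (s, a))| := by
              gcongr; exact abs_add_le _ _
          _ ≤ |(α * σ (s, a) - 1) * (Qstar (s, a) - Q (s, a))| + |Q' (s, a) - Qstar (s, a)|
              + |α * ω (s, a)| + |α * σ (s, a) * (Top Q (s, a) - Top Qstar (s, a))| := by
              gcongr; exact abs_sub _ _
          _ ≤ (1 - α * σ (s, a)) * Y + X + α * Z + α * σ (s, a) * γ * Y := by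
              linarith
      -- conclude the pointwise bound
      have hmono : α * σt * |Qstar (s, a) - Top Qstar (s, a)|
          ≤ α * σ (s, a) * |Qstar (s, a) - Top Qstar (s, a)| :=
        mul_le_mul_of_nonneg_right hc1 (abs_nonneg _)
      nlinarith [mul_nonneg (sub_nonneg.2 hc1) (mul_nonneg h1γ hY0)]
    calc α * σt * E ≤ α * σt * ((X + α * Z + (1 - α * σt * (1 - γ)) * Y) / (α * σt)) :=
          mul_le_mul_of_nonneg_left hEdiv hpos.le
      _ = X + α * Z + (1 - α * σt * (1 - γ)) * Y := by
          field_simp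
  -- conclude
  have hden : 0 < α * (1 - γ) * σt := by
    have : 0 < 1 - γ := by linarith
    positivity
  have hmul : α * σt * ((1 - γ) * D) ≤ α * σt * E :=
    mul_le_mul_of_nonneg_left stepA hpos.le
  have hfin : D ≤ (X + Y + α * Z) / (α * (1 - γ) * σt) := by
    rw [le_div_iff₀ hden]
    nlinarith [mul_nonneg (mul_nonneg hα0.le hσt.le) (mul_nonneg h1γ hY0)]
  calc D ≤ (X + Y + α * Z) / (α * (1 - γ) * σt) := hfin
    _ = 1 / (α * (1 - γ) * σt) * (X + Y + α * Z) := by rw [one_div, div_eq_inv_mul]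
end

section
/- (Projected policy update becomes greedy under a large step size.) Let A be a nonempty finite type, Δ(A) = {p : A → ℝ | p a ≥ 0 for all a, ∑_a p a = 1} the probability simplex regarded as a nonempty closed convex subset of the Euclidean space ℝ^A, Q : A → ℝ, π ∈ Δ(A), and η > 0. Let M = {a ∈ A | Q a = max_{a'} Q a'} and assume M ≠ A; set Δgap = max_a Q a − max_{a' ∉ M} Q a' (which is positive). If η ≥ 2/Δgap, then the Euclidean metric projection y of the point π + η·Q onto Δ(A) satisfies y a' = 0 for every a' ∉ M; that is, the projected policy-gradient update is supported on the set of maximizers of Q. -/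
/-- projected policy update becomes greedy under a large step size.
If `η ≥ 2/Δgap`, then the Euclidean projection `y` of `π + η Q` onto the simplex
`Δ(A)` vanishes on every non-maximizing action of `Q`. Here `y` is characterized as a
nearest point of `Δ(A)` to `π + η Q` in the Euclidean (ℓ₂) distance. -/
theorem projected_update_is_greedy
    {A : Type*} [Fintype A] [Nonempty A]
    (Q : A → ℝ)
    (pol : A → ℝ) (hpol0 : ∀ a, 0 ≤ pol a) (hpol1 : ∑ a, pol a = 1)
    (η : ℝ) (hη0 : 0 < η)
    (hM : ∃ a, Q a ≠ ⨆ a', Q a')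
    (hη : 2 / ((⨆ a, Q a) - ⨆ a : {a : A // Q a ≠ ⨆ a', Q a'}, Q a.1) ≤ η)
    (y : A → ℝ) (hy0 : ∀ a, 0 ≤ y a) (hy1 : ∑ a, y a = 1)
    (hproj : ∀ z : A → ℝ, (∀ a, 0 ≤ z a) → ∑ a, z a = 1 →
      ∑ a, (pol a + η * Q a - y a) ^ 2 ≤ ∑ a, (pol a + η * Q a - z a) ^ 2) :
    ∀ a', Q a' ≠ (⨆ a, Q a) → y a' = 0 := by
  classical
  intro a' ha'
  by_contra h0
  have hε : 0 < y a' := lt_of_le_of_ne (hy0 a') (Ne.symm h0)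
  set S : ℝ := ⨆ a, Q a with hSdef
  have hbdd : BddAbove (Set.range Q) := Set.Finite.bddAbove (Set.finite_range Q)
  obtain ⟨astar, hastar⟩ := Finite.exists_max Q
  have hS : S = Q astar := le_antisymm (ciSup_le hastar) (le_ciSup hbdd astar)
  haveI : Nonempty {a : A // Q a ≠ ⨆ a', Q a'} := ⟨⟨hM.choose, hM.choose_spec⟩⟩
  set S' : ℝ := ⨆ a : {a : A // Q a ≠ ⨆ a', Q a'}, Q a.1 with hS'def
  have hbdd' : BddAbove (Set.range fun a : {a : A // Q a ≠ ⨆ a', Q a'} => Q a.1) :=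
    Set.Finite.bddAbove (Set.finite_range _)
  have hQa'_le : Q a' ≤ S' := le_ciSup hbdd' ⟨a', ha'⟩
  have hS'lt : S' < S := by
    obtain ⟨⟨b, hb⟩, hbmax⟩ := Finite.exists_max (fun a : {a : A // Q a ≠ ⨆ a', Q a'} => Q a.1)
    have h1 : S' ≤ Q b := ciSup_le hbmax
    have h2 : Q b < S := lt_of_le_of_ne (hastar b |>.trans_eq hS.symm) hb
    exact h1.trans_lt h2
  have hgap : 0 < S - S' := sub_pos.mpr hS'lt
  have hη2 : 2 ≤ η * (S - S') := by
    have := (div_le_iff₀ hgap).mp hη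
    linarith [this]
  have hη3 : 2 ≤ η * (S - Q a') := by
    have : η * (S - S') ≤ η * (S - Q a') := by
      apply mul_le_mul_of_nonneg_left (by linarith) hη0.le
    linarith
  have hne : a' ≠ astar := fun h => ha' (h ▸ hS.symm ▸ rfl : Q a' = S)
  -- the competitor distribution: move the mass of a' to astar
  set z : A → ℝ := fun a => if a = a' then 0 else if a = astar then y astar + y a' else y a
    with hzdef
  have hz0 : ∀ a, 0 ≤ z a := by
    intro a
    simp only [hzdef]
    split_ifs with h1 h2
    · exact le_refl 0
    · exact add_nonneg (hy0 _) (hy0 _)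
    · exact hy0 a
  have hz1 : ∑ a, z a = 1 := by
    have : ∀ a ∈ Finset.univ, z a =
        y a + (if a = astar then y a' else 0) - (if a = a' then y a' else 0) := by
      intro a _
      by_cases h1 : a = a'
      · subst h1; simp [hzdef, hne]
      · by_cases h2 : a = astar
        · subst h2; simp [hzdef, Ne.symm hne]
        · simp [hzdef, h1, h2]
    rw [Finset.sum_congr rfl this]
    simp [Finset.sum_add_distrib, Finset.sum_sub_distrib, hy1]
  have hle := hproj z hz0 hz1
  -- the difference of objectives is supported on {a', astar}
  set x : A → ℝ := fun a => pol a + η * Q a with hxdef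
  set g : A → ℝ := fun a => (x a - z a) ^ 2 - (x a - y a) ^ 2 with hgdef
  have hsupp : ∑ a, g a = g a' + g astar := by
    rw [← Finset.sum_pair hne]
    refine (Finset.sum_subset (Finset.subset_univ _) ?_).symm
    intro k _ hk
    simp only [Finset.mem_insert, Finset.mem_singleton, not_or] at hk
    simp [hgdef, hzdef, hk.1, hk.2]
  have hdiff : ∑ a, g a = ∑ a, (x a - z a) ^ 2 - ∑ a, (x a - y a) ^ 2 := by
    rw [Finset.sum_sub_distrib]
  have hge : 0 ≤ g a' + g astar := by
    rw [← hsupp, hdiff]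
    exact sub_nonneg.mpr hle
  have hza' : z a' = 0 := by simp [hzdef]
  have hzastar : z astar = y astar + y a' := by simp [hzdef, Ne.symm hne]
  have hga' : g a' = (x a') ^ 2 - (x a' - y a') ^ 2 := by rw [hgdef]; simp [hza']
  have hgastar : g astar = (x astar - (y astar + y a')) ^ 2 - (x astar - y astar) ^ 2 := by
    rw [hgdef]; simp [hzastar]
  -- bounds
  have hpola' : pol a' ≤ 1 := by
    rw [← hpol1]
    exact Finset.single_le_sum (fun a _ => hpol0 a) (Finset.mem_univ a')
  have hysum : y a' + y astar ≤ 1 := by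
    rw [← hy1, ← Finset.sum_pair hne]
    exact Finset.sum_le_sum_of_subset_of_nonneg (Finset.subset_univ _)
      (fun a _ _ => hy0 a)
  have hxa' : x a' = pol a' + η * Q a' := rfl
  have hxastar : x astar = pol astar + η * Q astar := rfl
  have hQastar : Q astar = S := hS.symm
  have hpolastar : 0 ≤ pol astar := hpol0 astar
  have hyastar : 0 ≤ y astar := hy0 astar
  rw [hga', hgastar, hxa', hxastar, hQastar] at hge
  nlinarith [hε, hη3, hpola', hysum, hpolastar, hyastar, sq_nonneg (y a')]
end
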